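/- arXiv:2402.07188 — 10 statements merged into one kernel-verified Lean document; each statement's English description precedes it below -/
import Mathlib

section
/- For any positive integers K, F, Z, S with 0 < Z < F, if there exists a (K,F,Z,S) placement delivery array, then S ≥ ⌈K(F−Z)/(Z+1)⌉. -/
/-- Lower bound (Wei) on the number of integers `S` in a `(K,F,Z,S)` placement
delivery array: `S ≥ ⌈K(F−Z)/(Z+1)⌉`. -/
theorem pda_wei_lower_bound (K F Z S : ℕ) (hK : 0 < K) (hS : 0 < S)
    (hZ : 0 < Z) (hZF : Z < F)
    (P : Fin F → Fin K → Option (Fin S))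
    (hC1 : ∀ k : Fin K, (Finset.univ.filter fun j : Fin F => P j k = none).card = Z)
    (hC2 : ∀ s : Fin S, ∃ j k, P j k = some s)
    (hC3 : ∀ (j1 j2 : Fin F) (k1 k2 : Fin K) (s : Fin S),
      P j1 k1 = some s → P j2 k2 = some s → (j1, k1) ≠ (j2, k2) →
      j1 ≠ j2 ∧ k1 ≠ k2 ∧ P j1 k2 = none ∧ P j2 k1 = none) :
    ⌈((K : ℚ) * ((F : ℚ) - (Z : ℚ))) / ((Z : ℚ) + 1)⌉ ≤ (S : ℤ) := by
  classical
  set T : Finset (Fin F × Fin K) := Finset.univ.filter (fun p => P p.1 p.2 ≠ none) with hT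
  have hcol : ∀ k : Fin K,
      (Finset.univ.filter fun j : Fin F => P j k ≠ none).card = F - Z := by
    intro k
    have h := Finset.card_filter_add_card_filter_not
      (s := (Finset.univ : Finset (Fin F))) (p := fun j => P j k = none)
    rw [hC1 k, Finset.card_univ, Fintype.card_fin] at h
    simp only [ne_eq]
    omega
  have hTcard : T.card = K * (F - Z) := by
    have h1 : T.card = ∑ k : Fin K,
        (Finset.univ.filter fun j : Fin F => P j k ≠ none).card := by
      rw [hT, Finset.card_filter, ← Finset.univ_product_univ, Finset.sum_product]
      rw [Finset.sum_comm]
      simp [Finset.card_filter]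
    rw [h1]
    simp [hcol, Finset.sum_const, Finset.card_univ, mul_comm]
  have hfiber : ∀ s : Fin S,
      (Finset.univ.filter fun p : Fin F × Fin K => P p.1 p.2 = some s).card ≤ Z + 1 := by
    intro s
    set A : Finset (Fin F × Fin K) :=
      Finset.univ.filter fun p : Fin F × Fin K => P p.1 p.2 = some s with hA
    rcases A.eq_empty_or_nonempty with h | ⟨p0, hp0⟩
    · simp [← hA, h]
    · have hp0' : P p0.1 p0.2 = some s := by
        have := hp0; rw [hA, Finset.mem_filter] at this; exact this.2
      have hmap : ∀ p ∈ A.erase p0,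
          p.1 ∈ (Finset.univ.filter fun j : Fin F => P j p0.2 = none) := by
        intro p hp
        have hpne := Finset.ne_of_mem_erase hp
        have hpA := Finset.mem_of_mem_erase hp
        have hp' : P p.1 p.2 = some s := by
          rw [hA, Finset.mem_filter] at hpA; exact hpA.2
        have h3 := hC3 p.1 p0.1 p.2 p0.2 s hp' hp0'
          (by simpa [Prod.ext_iff] using hpne)
        simp [h3.2.2.1]
      have hinj : Set.InjOn (fun p : Fin F × Fin K => p.1) ↑(A.erase p0) := by
        intro p hp q hq hpq
        rw [Finset.mem_coe] at hp hq
        by_contra hne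
        have hp' : P p.1 p.2 = some s := by
          have := Finset.mem_of_mem_erase hp
          rw [hA, Finset.mem_filter] at this; exact this.2
        have hq' : P q.1 q.2 = some s := by
          have := Finset.mem_of_mem_erase hq
          rw [hA, Finset.mem_filter] at this; exact this.2
        have h3 := hC3 p.1 q.1 p.2 q.2 s hp' hq'
          (by simpa [Prod.ext_iff] using hne)
        exact h3.1 hpq
      have hle := Finset.card_le_card_of_injOn (fun p : Fin F × Fin K => p.1) hmap hinj
      rw [hC1 p0.2] at hle
      have hcardA : (A.erase p0).card = A.card - 1 := Finset.card_erase_of_mem hp0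
      have hpos : 0 < A.card := Finset.card_pos.mpr ⟨p0, hp0⟩
      omega
  have hbiU : T ⊆ Finset.univ.biUnion
      (fun s : Fin S => Finset.univ.filter fun p : Fin F × Fin K => P p.1 p.2 = some s) := by
    intro p hp
    rw [hT, Finset.mem_filter] at hp
    obtain ⟨s, hs⟩ := Option.ne_none_iff_exists'.mp hp.2
    exact Finset.mem_biUnion.mpr ⟨s, Finset.mem_univ _, by simp [hs]⟩
  have key : K * (F - Z) ≤ S * (Z + 1) := by
    calc K * (F - Z) = T.card := hTcard.symm
      _ ≤ (Finset.univ.biUnion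
          (fun s : Fin S => Finset.univ.filter fun p : Fin F × Fin K => P p.1 p.2 = some s)).card :=
        Finset.card_le_card hbiU
      _ ≤ ∑ s : Fin S,
          (Finset.univ.filter fun p : Fin F × Fin K => P p.1 p.2 = some s).card :=
        Finset.card_biUnion_le
      _ ≤ ∑ _s : Fin S, (Z + 1) := Finset.sum_le_sum (fun s _ => hfiber s)
      _ = S * (Z + 1) := by simp [Finset.sum_const, Finset.card_univ]
  rw [Int.ceil_le]
  rw [div_le_iff₀ (by positivity)]
  have h2 : ((K * (F - Z) : ℕ) : ℚ) ≤ ((S * (Z + 1) : ℕ) : ℚ) := by exact_mod_cast key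
  push_cast [Nat.cast_sub hZF.le] at h2
  push_cast
  linarith
end

section
/- For positive integers K, F, Z with 0 < Z < F, the iterated ceiling lower bound ⌈K(F−Z)/F⌉ + ⌈((F−Z−1)/(F−1))·⌈K(F−Z)/F⌉⌉ + ... + ⌈(1/(Z+1))·⌈(2/(Z+2))·⌈...⌈K(F−Z)/F⌉...⌉⌉⌉ (with F−Z terms) is greater than or equal to ⌈K(F−Z)/(Z+1)⌉. -/
/-- The `m`-th nested-ceiling term in the iterated lower bound of Cheng et al.:
`nestedTerm K F Z 0 = ⌈K(F−Z)/F⌉` and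
`nestedTerm K F Z (m+1) = ⌈((F−Z−(m+1))/(F−(m+1))) · nestedTerm K F Z m⌉`. -/
def nestedTerm (K F Z : ℕ) : ℕ → ℤ
  | 0 => ⌈((K : ℚ) * ((F : ℚ) - (Z : ℚ))) / (F : ℚ)⌉
  | m + 1 =>
      ⌈(((F : ℚ) - (Z : ℚ) - ((m : ℚ) + 1)) / ((F : ℚ) - ((m : ℚ) + 1))) *
        ((nestedTerm K F Z m : ℤ) : ℚ)⌉

/-- Hockey-stick identity in the form we need. -/
lemma aux_hockey (Z n : ℕ) :
    ∑ m ∈ Finset.range n, (Z + m).choose Z = (Z + n).choose (Z + 1) := by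
  induction n with
  | zero => simp [Nat.choose_eq_zero_of_lt]
  | succ n ih =>
      rw [Finset.sum_range_succ, ih]
      have : Z + (n + 1) = (Z + n) + 1 := by ring
      rw [this, Nat.choose_succ_succ' (Z + n) Z]
      omega

lemma aux_sum_choose (F Z : ℕ) (hZF : Z < F) :
    ∑ m ∈ Finset.range (F - Z), (F - 1 - m).choose Z = F.choose (Z + 1) := by
  have h := Finset.sum_range_reflect (fun m => (F - 1 - m).choose Z) (F - Z)
  rw [← h]
  have : ∀ m ∈ Finset.range (F - Z),
      (F - 1 - (F - Z - 1 - m)).choose Z = (Z + m).choose Z := by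
    intro m hm
    rw [Finset.mem_range] at hm
    congr 1
    omega
  rw [Finset.sum_congr rfl this, aux_hockey]
  congr 1
  omega

/-- The key pointwise bound on each nested-ceiling term. -/
lemma nested_ge (K F Z : ℕ) (m : ℕ) (hm : m + Z < F) :
    (K : ℚ) * ((F : ℚ) - Z) * ((F - 1 - m).choose Z : ℚ) /
      (((Z : ℚ) + 1) * (F.choose (Z + 1) : ℚ)) ≤ ((nestedTerm K F Z m : ℤ) : ℚ) := by
  have hF : 0 < F := by omega
  have hDpos : (0 : ℚ) < ((Z : ℚ) + 1) * (F.choose (Z + 1) : ℚ) := by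
    have : 0 < F.choose (Z + 1) := Nat.choose_pos (by omega)
    positivity
  induction m with
  | zero =>
      have key : F * (F - 1).choose Z = F.choose (Z + 1) * (Z + 1) := by
        have h := Nat.add_one_mul_choose_eq (F - 1) Z
        have h1 : F - 1 + 1 = F := by omega
        rw [h1] at h
        exact h
      have keyQ : (F : ℚ) * ((F - 1).choose Z : ℚ) =
          (F.choose (Z + 1) : ℚ) * ((Z : ℚ) + 1) := by exact_mod_cast key
      have hFQ : (0 : ℚ) < (F : ℚ) := by exact_mod_cast hF
      have heq : (K : ℚ) * ((F : ℚ) - Z) * (((F - 1 - 0).choose Z : ℕ) : ℚ) /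
          (((Z : ℚ) + 1) * (F.choose (Z + 1) : ℚ)) =
          (K : ℚ) * ((F : ℚ) - Z) / (F : ℚ) := by
        simp only [Nat.sub_zero]
        rw [div_eq_div_iff (ne_of_gt hDpos) (ne_of_gt hFQ)]
        linear_combination ((K : ℚ) * ((F : ℚ) - Z)) * keyQ
      rw [heq]
      exact Int.le_ceil _
  | succ m ih =>
      have ih' := ih (by omega)
      -- ratio is nonnegative
      have hnum : (0 : ℚ) ≤ (F : ℚ) - Z - ((m : ℚ) + 1) := by
        have : (m : ℕ) + 1 + Z ≤ F := by omega
        have := (Nat.cast_le (α := ℚ)).mpr this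
        push_cast at this
        linarith
      have hden : (0 : ℚ) < (F : ℚ) - ((m : ℚ) + 1) := by
        have : (m : ℕ) + 1 < F := by omega
        have := (Nat.cast_lt (α := ℚ)).mpr this
        push_cast at this
        linarith
      set r : ℚ := ((F : ℚ) - Z - ((m : ℚ) + 1)) / ((F : ℚ) - ((m : ℚ) + 1)) with hr
      have hr0 : 0 ≤ r := div_nonneg hnum (le_of_lt hden)
      -- nat identity relating consecutive binomials
      have natid : (F - 1 - m) * (F - 1 - (m + 1)).choose Z
          = (F - Z - (m + 1)) * (F - 1 - m).choose Z := by
        have h := Nat.choose_mul_succ_eq (F - 2 - m) Z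
        have h1 : F - 2 - m + 1 = F - 1 - m := by omega
        rw [h1] at h
        have h2 : F - 1 - (m + 1) = F - 2 - m := by omega
        have h3 : F - 1 - m - Z = F - Z - (m + 1) := by omega
        rw [h2, ← h3]
        simpa [Nat.mul_comm] using h
      -- cast identity
      have natidQ : ((F : ℚ) - ((m : ℚ) + 1)) * ((F - 1 - (m + 1)).choose Z : ℚ)
          = ((F : ℚ) - Z - ((m : ℚ) + 1)) * ((F - 1 - m).choose Z : ℚ) := by
        have c1 : ((F - 1 - m : ℕ) : ℚ) = (F : ℚ) - ((m : ℚ) + 1) := by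
          have : (m : ℕ) + 1 ≤ F := by omega
          push_cast [Nat.cast_sub (by omega : m ≤ F - 1), Nat.cast_sub (by omega : 1 ≤ F)]
          ring
        have c2 : ((F - Z - (m + 1) : ℕ) : ℚ) = (F : ℚ) - Z - ((m : ℚ) + 1) := by
          push_cast [Nat.cast_sub (by omega : m + 1 ≤ F - Z), Nat.cast_sub (by omega : Z ≤ F)]
          ring
        calc ((F : ℚ) - ((m : ℚ) + 1)) * ((F - 1 - (m + 1)).choose Z : ℚ)
            = ((F - 1 - m : ℕ) : ℚ) * ((F - 1 - (m + 1)).choose Z : ℚ) := by rw [c1]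
          _ = ((F - Z - (m + 1) : ℕ) : ℚ) * ((F - 1 - m).choose Z : ℚ) := by
              exact_mod_cast congrArg (Nat.cast : ℕ → ℚ) natid
          _ = ((F : ℚ) - Z - ((m : ℚ) + 1)) * ((F - 1 - m).choose Z : ℚ) := by rw [c2]
      -- bound_{m+1} = r * bound_m
      have heq : (K : ℚ) * ((F : ℚ) - Z) * ((F - 1 - (m + 1)).choose Z : ℚ) /
          (((Z : ℚ) + 1) * (F.choose (Z + 1) : ℚ)) =
          r * ((K : ℚ) * ((F : ℚ) - Z) * ((F - 1 - m).choose Z : ℚ) /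
            (((Z : ℚ) + 1) * (F.choose (Z + 1) : ℚ))) := by
        have hD : ((Z : ℚ) + 1) * (F.choose (Z + 1) : ℚ) ≠ 0 := ne_of_gt hDpos
        have hdD : ((F : ℚ) - ((m : ℚ) + 1)) * (((Z : ℚ) + 1) * (F.choose (Z + 1) : ℚ)) ≠ 0 :=
          ne_of_gt (mul_pos hden hDpos)
        rw [hr, div_mul_div_comm, div_eq_div_iff hD hdD]
        linear_combination ((K : ℚ) * ((F : ℚ) - (Z : ℚ)) *
          (((Z : ℚ) + 1) * (F.choose (Z + 1) : ℚ))) * natidQ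
      have hstep : r * ((K : ℚ) * ((F : ℚ) - Z) * ((F - 1 - m).choose Z : ℚ) /
            (((Z : ℚ) + 1) * (F.choose (Z + 1) : ℚ)))
          ≤ r * ((nestedTerm K F Z m : ℤ) : ℚ) :=
        mul_le_mul_of_nonneg_left ih' hr0
      have hceil : r * ((nestedTerm K F Z m : ℤ) : ℚ)
          ≤ ((nestedTerm K F Z (m + 1) : ℤ) : ℚ) := by
        show _ ≤ ((⌈(((F : ℚ) - (Z : ℚ) - ((m : ℚ) + 1)) / ((F : ℚ) - ((m : ℚ) + 1))) *
          ((nestedTerm K F Z m : ℤ) : ℚ)⌉ : ℤ) : ℚ)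
        exact Int.le_ceil _
      calc (K : ℚ) * ((F : ℚ) - Z) * ((F - 1 - (m + 1)).choose Z : ℚ) /
          (((Z : ℚ) + 1) * (F.choose (Z + 1) : ℚ))
          = r * ((K : ℚ) * ((F : ℚ) - Z) * ((F - 1 - m).choose Z : ℚ) /
            (((Z : ℚ) + 1) * (F.choose (Z + 1) : ℚ))) := heq
        _ ≤ r * ((nestedTerm K F Z m : ℤ) : ℚ) := hstep
        _ ≤ _ := hceil

/-- The iterated-ceiling lower bound (sum of `F−Z` nested ceiling terms) is at
least `⌈K(F−Z)/(Z+1)⌉`. -/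
theorem iterated_ceiling_ge_wei_bound (K F Z : ℕ) (hK : 0 < K) (hZ : 0 < Z)
    (hZF : Z < F) :
    ⌈((K : ℚ) * ((F : ℚ) - (Z : ℚ))) / ((Z : ℚ) + 1)⌉ ≤
      ∑ m ∈ Finset.range (F - Z), nestedTerm K F Z m := by
  rw [Int.ceil_le]
  push_cast
  have hDpos : (0 : ℚ) < (F.choose (Z + 1) : ℚ) := by
    exact_mod_cast Nat.choose_pos (by omega : Z + 1 ≤ F)
  have h1 : ∑ m ∈ Finset.range (F - Z),
      (K : ℚ) * ((F : ℚ) - Z) * ((F - 1 - m).choose Z : ℚ) /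
        (((Z : ℚ) + 1) * (F.choose (Z + 1) : ℚ))
      ≤ ∑ m ∈ Finset.range (F - Z), ((nestedTerm K F Z m : ℤ) : ℚ) := by
    apply Finset.sum_le_sum
    intro m hm
    rw [Finset.mem_range] at hm
    exact nested_ge K F Z m (by omega)
  have h2 : ∑ m ∈ Finset.range (F - Z),
      (K : ℚ) * ((F : ℚ) - Z) * ((F - 1 - m).choose Z : ℚ) /
        (((Z : ℚ) + 1) * (F.choose (Z + 1) : ℚ))
      = (K : ℚ) * ((F : ℚ) - Z) / ((Z : ℚ) + 1) := by
    rw [← Finset.sum_div, ← Finset.mul_sum]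
    have : ∑ m ∈ Finset.range (F - Z), ((F - 1 - m).choose Z : ℚ)
        = (F.choose (Z + 1) : ℚ) := by
      exact_mod_cast congrArg (Nat.cast : ℕ → ℚ) (aux_sum_choose F Z hZF)
    rw [this]
    field_simp
  linarith
end

section
/- In the PDA construction from a t-(v,k,λ) design (rows indexed by x ∈ X, columns by (A,B) with B a (k−i)-subset of block A, non-star entry A∖(B∪{x}) when x ∈ A∖B): if two distinct positions (x1,(A1,B1)) and (x2,(A2,B2)) with x1 ≠ x2 and (A1,B1) ≠ (A2,B2) carry equal non-star symbols, i.e. A1∖(B1∪{x1}) = A2∖(B2∪{x2}), then the cross entries are stars: x1 ∉ A2∖B2 and x2 ∉ A1∖B1. -/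
/-- PDA condition C3(b) for the Scheme I array: if two distinct positions
`(x1,(A1,B1))` and `(x2,(A2,B2))` with `x1 ≠ x2` carry equal non-star symbols
`A1∖(B1∪{x1}) = A2∖(B2∪{x2})`, then the cross entries are stars, i.e.
`x1 ∉ A2∖B2` and `x2 ∉ A1∖B1`. -/
theorem schemeI_cross_star {V : Type*} [DecidableEq V]
    (A1 A2 B1 B2 : Finset V) (x1 x2 : V)
    (hne : x1 ≠ x2) (hB1 : B1 ⊆ A1) (hB2 : B2 ⊆ A2)
    (h1A : x1 ∈ A1) (h1B : x1 ∉ B1) (h2A : x2 ∈ A2) (h2B : x2 ∉ B2)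
    (heq : A1 \ insert x1 B1 = A2 \ insert x2 B2) :
    ¬(x1 ∈ A2 ∧ x1 ∉ B2) ∧ ¬(x2 ∈ A1 ∧ x2 ∉ B1) := by
  constructor
  · rintro ⟨hA, hB⟩
    have : x1 ∈ A2 \ insert x2 B2 := by simp [hA, hB, hne]
    rw [← heq] at this
    simp at this
  · rintro ⟨hA, hB⟩
    have : x2 ∈ A1 \ insert x1 B1 := by simp [hA, hB, hne.symm]
    rw [heq] at this
    simp at this
end

section
/- Let (X,A) be a t-(v,k,λ) design and i ∈ {1,...,t}. In the array P with rows x ∈ X and columns (A,B) (B a (k−i)-subset of block A, non-star entry A∖(B∪{x}) when x ∈ A∖B), each labeled symbol (S0)_α, where S0 is an (i−1)-subset of X, appears in exactly v−i+1 rows, namely in every row x with x ∉ S0 that lies in a suitable block; precisely, each distinct symbol occurs exactly v−(i−1) times in P. -/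
open Finset

lemma schemeI_between {V : Type*} [DecidableEq V] (T S : Finset V) (hTS : T ⊆ S) (n : ℕ)
    (hn : T.card ≤ n) :
    ((S.powersetCard n).filter fun U => T ⊆ U).card = (S.card - T.card).choose (n - T.card) := by
  rw [← Finset.card_sdiff_of_subset hTS, ← Finset.card_powersetCard]
  refine Finset.card_nbij' (fun U => U \ T) (fun W => W ∪ T) ?_ ?_ ?_ ?_
  · intro U hU
    simp only [Finset.mem_coe, Finset.mem_filter, Finset.mem_powersetCard] at hU ⊢
    obtain ⟨⟨hUS, hUc⟩, hTU⟩ := hU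
    exact ⟨Finset.sdiff_subset_sdiff hUS le_rfl, by rw [Finset.card_sdiff_of_subset hTU, hUc]⟩
  · intro W hW
    simp only [Finset.mem_coe, Finset.mem_filter, Finset.mem_powersetCard] at hW ⊢
    obtain ⟨hWS, hWc⟩ := hW
    have hdisj : Disjoint W T := Finset.disjoint_of_subset_left hWS Finset.sdiff_disjoint
    refine ⟨⟨Finset.union_subset (hWS.trans Finset.sdiff_subset) hTS, ?_⟩,
      Finset.subset_union_right⟩
    rw [Finset.card_union_of_disjoint hdisj, hWc, Nat.sub_add_cancel hn]
  · intro U hU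
    simp only [Finset.mem_coe, Finset.mem_filter, Finset.mem_powersetCard] at hU
    exact Finset.sdiff_union_of_subset hU.2
  · intro W hW
    simp only [Finset.mem_coe, Finset.mem_filter, Finset.mem_powersetCard] at hW
    show (W ∪ T) \ T = W
    rw [Finset.union_sdiff_right, Finset.sdiff_eq_self_of_disjoint
      (Finset.disjoint_of_subset_left hW.1 Finset.sdiff_disjoint)]

lemma schemeI_count {V : Type*} [Fintype V] [DecidableEq V] (T S : Finset V) (hTS : T ⊆ S)
    (n : ℕ) (hn : T.card ≤ n) :
    (Finset.univ.filter fun U : Finset V => T ⊆ U ∧ U ⊆ S ∧ U.card = n).card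
      = (S.card - T.card).choose (n - T.card) := by
  rw [← schemeI_between T S hTS n hn]
  congr 1
  ext U
  simp only [Finset.mem_filter, Finset.mem_powersetCard, Finset.mem_univ, true_and]
  tauto

lemma schemeI_key {V : Type*} [Fintype V] [DecidableEq V] {b k t lam : ℕ}
    (blocks : Fin b → Finset V) (hcard : ∀ a, (blocks a).card = k) (htk : t ≤ k)
    (hdes : ∀ T : Finset V, T.card = t →
      (Finset.univ.filter fun a => T ⊆ blocks a).card = lam)
    (T : Finset V) (i : ℕ) (hT : T.card = i) (hit : i ≤ t) :
    (Finset.univ.filter fun a => T ⊆ blocks a).card * (k - i).choose (t - i)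
      = lam * ((Fintype.card V - i).choose (t - i)) := by
  have hswap :
      ∑ a : Fin b, (Finset.univ.filter
          fun U : Finset V => T ⊆ U ∧ U ⊆ blocks a ∧ U.card = t).card
        = ∑ U ∈ Finset.univ.filter (fun U : Finset V => T ⊆ U ∧ U.card = t),
            (Finset.univ.filter fun a => U ⊆ blocks a).card := by
    simp only [Finset.card_filter, Finset.sum_filter]
    rw [Finset.sum_comm]
    exact Finset.sum_congr rfl fun U _ => by
      by_cases h : T ⊆ U ∧ U.card = t
      · simp only [if_pos h]
        exact Finset.sum_congr rfl fun a _ => by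
          rcases h with ⟨h1, h2⟩
          split_ifs <;> tauto
      · simp only [if_neg h]
        exact Finset.sum_eq_zero fun a _ => by
          split_ifs with hh
          · exact absurd ⟨hh.1, hh.2.2⟩ h
          · rfl
  have hL : ∀ a : Fin b, (Finset.univ.filter
      fun U : Finset V => T ⊆ U ∧ U ⊆ blocks a ∧ U.card = t).card
        = if T ⊆ blocks a then (k - i).choose (t - i) else 0 := by
    intro a
    split_ifs with h
    · rw [schemeI_count T (blocks a) h t (by omega), hcard, hT]
    · rw [Finset.card_eq_zero, Finset.filter_eq_empty_iff]
      intro U _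
      rintro ⟨h1, h2, -⟩
      exact h (h1.trans h2)
  calc (Finset.univ.filter fun a => T ⊆ blocks a).card * (k - i).choose (t - i)
      = ∑ a : Fin b, if T ⊆ blocks a then (k - i).choose (t - i) else 0 := by
        rw [Finset.sum_ite, Finset.sum_const, Finset.sum_const]; simp [mul_comm]
    _ = ∑ a : Fin b, (Finset.univ.filter
          fun U : Finset V => T ⊆ U ∧ U ⊆ blocks a ∧ U.card = t).card := by
        simp [hL]
    _ = ∑ U ∈ Finset.univ.filter (fun U : Finset V => T ⊆ U ∧ U.card = t),
            (Finset.univ.filter fun a => U ⊆ blocks a).card := hswap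
    _ = lam * ((Fintype.card V - i).choose (t - i)) := by
        rw [Finset.sum_congr rfl fun U hU => hdes U (Finset.mem_filter.mp hU).2.2,
          Finset.sum_const]
        have : (Finset.univ.filter fun U : Finset V => T ⊆ U ∧ U.card = t).card
            = ((Finset.univ : Finset V).card - i).choose (t - i) := by
          rw [← hT, ← schemeI_count T Finset.univ (Finset.subset_univ T) t (by omega)]
          congr 1; ext U; simp [Finset.subset_univ]
        rw [this, Finset.card_univ, smul_eq_mul, mul_comm]

/-- Regularity of the Scheme I array.  Rows are points `x`, columns are pairs
`(a,B)` with `B` a `(k−i)`-subset of the block `blocks a`; the non-star entry at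
`(x,(a,B))` is the `(i−1)`-set `blocks a ∖ (B ∪ {x})` (when `x ∈ blocks a ∖ B`).
For every `(i−1)`-subset `S0` of `X`:
* in each row `x ∉ S0` the symbol `S0` occurs in exactly `λ_i` columns
  (where `λ_i·C(k−i,t−i) = λ·C(v−i,t−i)`);
* `S0` appears in exactly `v−(i−1) = v−i+1` rows;
* hence the (unlabeled) symbol `S0` occurs `(v−i+1)·λ_i` times in total, i.e.
  each labeled symbol `(S0)_α` occurs exactly `v−i+1` times. -/
theorem schemeI_symbol_regularity {V : Type*} [Fintype V] [DecidableEq V]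
    (v k t lam i b li : ℕ) (blocks : Fin b → Finset V)
    (hv : Fintype.card V = v) (hkv : k < v) (htk : t ≤ k) (ht : 1 ≤ t)
    (hlam : 1 ≤ lam) (hi1 : 1 ≤ i) (hit : i ≤ t)
    (hcard : ∀ a, (blocks a).card = k)
    (hdes : ∀ T : Finset V, T.card = t →
      (Finset.univ.filter fun a => T ⊆ blocks a).card = lam)
    (hli : li * Nat.choose (k - i) (t - i) = lam * Nat.choose (v - i) (t - i))
    (S0 : Finset V) (hS0 : S0.card = i - 1) :
    (∀ x : V, x ∉ S0 →
      (Finset.univ.filter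
        (fun c : (a : Fin b) × {B : Finset V // B ⊆ blocks a ∧ B.card = k - i} =>
          x ∈ blocks c.1 ∧ x ∉ c.2.1 ∧ blocks c.1 \ insert x c.2.1 = S0)).card = li) ∧
    (Finset.univ.filter
      (fun x : V =>
        ∃ c : (a : Fin b) × {B : Finset V // B ⊆ blocks a ∧ B.card = k - i},
          x ∈ blocks c.1 ∧ x ∉ c.2.1 ∧ blocks c.1 \ insert x c.2.1 = S0)).card
      = v - (i - 1) ∧
    (Finset.univ.filter
      (fun p : V × ((a : Fin b) × {B : Finset V // B ⊆ blocks a ∧ B.card = k - i}) =>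
        p.1 ∈ blocks p.2.1 ∧ p.1 ∉ p.2.2.1 ∧
          blocks p.2.1 \ insert p.1 p.2.2.1 = S0)).card = (v - (i - 1)) * li := by
  -- number of blocks through any i-set is li
  have hN : ∀ T : Finset V, T.card = i →
      (Finset.univ.filter fun a => T ⊆ blocks a).card = li := by
    intro T hT
    have hk := schemeI_key blocks hcard htk hdes T i hT hit
    rw [hv] at hk
    have hC : 0 < (k - i).choose (t - i) := Nat.choose_pos (by omega)
    exact Nat.eq_of_mul_eq_mul_right hC (hk.trans hli.symm)
  have hlipos : 0 < li := by
    have c1 : 0 < (v - i).choose (t - i) := Nat.choose_pos (by omega)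
    have hb : 0 < lam * (v - i).choose (t - i) := Nat.mul_pos hlam c1
    rw [← hli] at hb
    exact Nat.pos_of_ne_zero fun h => by simp [h] at hb
  -- row count
  have hrow : ∀ x : V, x ∉ S0 →
      (Finset.univ.filter
        (fun c : (a : Fin b) × {B : Finset V // B ⊆ blocks a ∧ B.card = k - i} =>
          x ∈ blocks c.1 ∧ x ∉ c.2.1 ∧ blocks c.1 \ insert x c.2.1 = S0)).card = li := by
    intro x hx
    have hTc : (insert x S0).card = i := by
      rw [Finset.card_insert_of_notMem hx, hS0]; omega
    rw [← hN (insert x S0) hTc]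
    refine Finset.card_bij' (fun c _ => c.1)
      (fun a ha => ⟨a, ⟨blocks a \ insert x S0, Finset.sdiff_subset, ?_⟩⟩) ?_ ?_ ?_ ?_
    · -- card of complement
      rw [Finset.card_sdiff_of_subset (by simpa using (Finset.mem_filter.mp ha).2), hcard, hTc]
    · -- forward membership
      intro c hc
      simp only [Finset.mem_filter, Finset.mem_univ, true_and] at hc ⊢
      obtain ⟨h1, h2, h3⟩ := hc
      refine Finset.insert_subset h1 ?_
      rw [← h3]; exact Finset.sdiff_subset
    · -- backward membership
      intro a ha
      simp only [Finset.mem_filter, Finset.mem_univ, true_and] at ha ⊢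
      have hxa : x ∈ blocks a := ha (Finset.mem_insert_self x S0)
      have hS0a : S0 ⊆ blocks a := (Finset.subset_insert x S0).trans ha
      refine ⟨hxa, by simp, ?_⟩
      have h1 : insert x (blocks a \ insert x S0) = blocks a \ S0 := by
        ext y
        by_cases hyx : y = x
        · subst hyx; simp [hxa, hx]
        · simp [hyx]
      rw [h1, Finset.sdiff_sdiff_self_left, Finset.inter_eq_right.mpr hS0a]
    · -- left inverse
      rintro ⟨a, B, hBsub, hBcard⟩ hc
      simp only [Finset.mem_filter, Finset.mem_univ, true_and] at hc
      obtain ⟨h1, h2, h3⟩ := hc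
      dsimp only at h1 h2 h3 ⊢
      have hBeq : blocks a \ insert x S0 = B := by
        ext y
        have h4 := Finset.ext_iff.mp h3 y
        simp only [Finset.mem_sdiff, Finset.mem_insert] at h4 ⊢
        by_cases hyx : y = x
        · subst hyx; simp [h2]
        · have h5 : y ∈ B → y ∈ blocks a := fun h => hBsub h
          tauto
      subst hBeq
      rfl
    · intro a _; rfl
  refine ⟨hrow, ?_, ?_⟩
  · -- rows where S0 appears
    have he : (Finset.univ.filter
        (fun x : V =>
          ∃ c : (a : Fin b) × {B : Finset V // B ⊆ blocks a ∧ B.card = k - i},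
            x ∈ blocks c.1 ∧ x ∉ c.2.1 ∧ blocks c.1 \ insert x c.2.1 = S0))
        = Finset.univ \ S0 := by
      ext x
      simp only [Finset.mem_filter, Finset.mem_univ, true_and, Finset.mem_sdiff]
      constructor
      · rintro ⟨c, h1, h2, h3⟩
        intro hxS0
        rw [← h3] at hxS0
        simp at hxS0
      · intro hx
        have := hrow x hx
        have hne : (Finset.univ.filter
            (fun c : (a : Fin b) × {B : Finset V // B ⊆ blocks a ∧ B.card = k - i} =>
              x ∈ blocks c.1 ∧ x ∉ c.2.1 ∧ blocks c.1 \ insert x c.2.1 = S0)).Nonempty := by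
          rw [← Finset.card_pos, this]; exact hlipos
        obtain ⟨c, hc⟩ := hne
        simp only [Finset.mem_filter, Finset.mem_univ, true_and] at hc
        exact ⟨c, hc⟩
    rw [he, Finset.card_sdiff_of_subset (Finset.subset_univ S0), Finset.card_univ, hv, hS0]
  · -- total count
    rw [Finset.card_eq_sum_card_fiberwise
      (f := fun p : V × ((a : Fin b) × {B : Finset V // B ⊆ blocks a ∧ B.card = k - i}) => p.1)
      (t := Finset.univ) (fun _ _ => Finset.mem_univ _)]
    have hfib : ∀ x : V,
        ((Finset.univ.filter
          (fun p : V × ((a : Fin b) × {B : Finset V // B ⊆ blocks a ∧ B.card = k - i}) =>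
            p.1 ∈ blocks p.2.1 ∧ p.1 ∉ p.2.2.1 ∧
              blocks p.2.1 \ insert p.1 p.2.2.1 = S0)).filter (fun p => p.1 = x)).card
        = (Finset.univ.filter
            (fun c : (a : Fin b) × {B : Finset V // B ⊆ blocks a ∧ B.card = k - i} =>
              x ∈ blocks c.1 ∧ x ∉ c.2.1 ∧ blocks c.1 \ insert x c.2.1 = S0)).card := by
      intro x
      refine Finset.card_nbij' (fun p => p.2) (fun c => (x, c)) ?_ ?_ ?_ ?_
      · intro p hp
        simp only [Finset.mem_coe, Finset.mem_filter, Finset.mem_univ, true_and] at hp ⊢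
        obtain ⟨⟨h1, h2, h3⟩, h4⟩ := hp
        rw [← h4]; exact ⟨h1, h2, h3⟩
      · intro c hc
        simp only [Finset.mem_coe, Finset.mem_filter, Finset.mem_univ, true_and] at hc ⊢
        exact ⟨hc, trivial⟩
      · intro p hp
        simp only [Finset.mem_coe, Finset.mem_filter] at hp
        rw [← hp.2]
      · intro c _; rfl
    have hval : ∀ x : V,
        (Finset.univ.filter
            (fun c : (a : Fin b) × {B : Finset V // B ⊆ blocks a ∧ B.card = k - i} =>
              x ∈ blocks c.1 ∧ x ∉ c.2.1 ∧ blocks c.1 \ insert x c.2.1 = S0)).card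
          = if x ∈ S0 then 0 else li := by
      intro x
      split_ifs with hx
      · rw [Finset.card_eq_zero, Finset.filter_eq_empty_iff]
        rintro c - ⟨h1, h2, h3⟩
        rw [← h3] at hx
        simp at hx
      · exact hrow x hx
    calc ∑ x : V, ((Finset.univ.filter
          (fun p : V × ((a : Fin b) × {B : Finset V // B ⊆ blocks a ∧ B.card = k - i}) =>
            p.1 ∈ blocks p.2.1 ∧ p.1 ∉ p.2.2.1 ∧
              blocks p.2.1 \ insert p.1 p.2.2.1 = S0)).filter (fun p => p.1 = x)).card
        = ∑ x : V, if x ∈ S0 then 0 else li := by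
          exact Finset.sum_congr rfl fun x _ => (hfib x).trans (hval x)
      _ = (v - (i - 1)) * li := by
          rw [Finset.sum_ite, Finset.sum_const, Finset.sum_const, smul_eq_mul, smul_eq_mul,
            mul_comm]
          have h1 : (Finset.univ.filter (fun x : V => ¬x ∈ S0)) = Finset.univ \ S0 := by
            ext y; simp
          rw [h1, Finset.card_sdiff_of_subset (Finset.subset_univ S0), Finset.card_univ, hv, hS0]
          ring
end

section
/- The PDA obtained from a t-(v,k,λ) design via Scheme I meets the lower bound S ≥ ⌈K(F−Z)/(Z+1)⌉ with equality: for K = λ·C(v,t)·C(k,i)/C(k,t), F = v, Z = v−i, one has ⌈K(F−Z)/(Z+1)⌉ = λ·C(v,i−1)·C(v−i,t−i)/C(k−i,t−i). -/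
/-- Optimality of Scheme I: with `K = λ·C(v,t)·C(k,i)/C(k,t) = b·C(k,i)`,
`F = v`, `Z = v−i` (so `F−Z = i`, `Z+1 = v−i+1`), the Wei lower bound
`⌈K(F−Z)/(Z+1)⌉` equals exactly `S = C(v,i−1)·λ_i`, where `b` and the
replication number `λ_i = li` are characterized by `b·C(k,t) = λ·C(v,t)` and
`li·C(k−i,t−i) = λ·C(v−i,t−i)`. -/
theorem schemeI_meets_wei_bound (v k t lam i b li : ℕ)
    (hkv : k < v) (htk : t ≤ k) (ht : 1 ≤ t) (hlam : 1 ≤ lam)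
    (hi1 : 1 ≤ i) (hit : i ≤ t)
    (hb : b * Nat.choose k t = lam * Nat.choose v t)
    (hli : li * Nat.choose (k - i) (t - i) = lam * Nat.choose (v - i) (t - i)) :
    ⌈(((b * Nat.choose k i : ℕ) : ℚ) * (i : ℚ)) / (((v : ℚ) - (i : ℚ)) + 1)⌉
      = ((Nat.choose v (i - 1) * li : ℕ) : ℤ) := by
  have hik : i ≤ k := hit.trans htk
  have hiv : i ≤ v := hik.trans hkv.le
  have hc1 := Nat.choose_mul (n := k) hit      -- C k t * C t i = C k i * C (k-i) (t-i)
  have hc2 := Nat.choose_mul (n := v) hit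
  have hpos : 0 < Nat.choose (k - i) (t - i) :=
    Nat.choose_pos (Nat.sub_le_sub_right htk i)
  -- key: b * C k i = li * C v i
  have key : b * Nat.choose k i = li * Nat.choose v i := by
    have h : b * Nat.choose k i * Nat.choose (k - i) (t - i)
        = li * Nat.choose v i * Nat.choose (k - i) (t - i) := by
      calc b * Nat.choose k i * Nat.choose (k - i) (t - i)
          = b * (Nat.choose k i * Nat.choose (k - i) (t - i)) := by ring
        _ = b * (Nat.choose k t * Nat.choose t i) := by rw [← hc1]
        _ = (b * Nat.choose k t) * Nat.choose t i := by ring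
        _ = (lam * Nat.choose v t) * Nat.choose t i := by rw [hb]
        _ = lam * (Nat.choose v t * Nat.choose t i) := by ring
        _ = lam * (Nat.choose v i * Nat.choose (v - i) (t - i)) := by rw [hc2]
        _ = (lam * Nat.choose (v - i) (t - i)) * Nat.choose v i := by ring
        _ = (li * Nat.choose (k - i) (t - i)) * Nat.choose v i := by rw [hli]
        _ = li * Nat.choose v i * Nat.choose (k - i) (t - i) := by ring
    exact Nat.eq_of_mul_eq_mul_right hpos h
  -- C v i * i = C v (i-1) * (v - i + 1)
  have hstep : Nat.choose v i * i = Nat.choose v (i - 1) * (v - i + 1) := by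
    have h := Nat.choose_succ_right_eq v (i - 1)
    have e1 : i - 1 + 1 = i := by omega
    have e2 : v - (i - 1) = v - i + 1 := by omega
    rw [e1, e2] at h
    exact h
  have hnum : b * Nat.choose k i * i = Nat.choose v (i - 1) * li * (v - i + 1) := by
    calc b * Nat.choose k i * i = li * (Nat.choose v i * i) := by rw [key]; ring
      _ = Nat.choose v (i - 1) * li * (v - i + 1) := by rw [hstep]; ring
  have hden : ((v : ℚ) - (i : ℚ)) + 1 = ((v - i + 1 : ℕ) : ℚ) := by
    push_cast [hiv]
    ring
  have hdpos : (0 : ℚ) < ((v - i + 1 : ℕ) : ℚ) := by positivity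
  have : (((b * Nat.choose k i : ℕ) : ℚ) * (i : ℚ)) / (((v : ℚ) - (i : ℚ)) + 1)
      = ((Nat.choose v (i - 1) * li : ℕ) : ℚ) := by
    rw [hden]
    rw [div_eq_iff hdpos.ne']
    push_cast
    exact_mod_cast congrArg (Nat.cast : ℕ → ℚ) hnum
  rw [this]
  exact_mod_cast Int.ceil_natCast _
end

section
/- Let (X,A) be a t-(v,k,λ) design and fix i ∈ {1,...,t−1}. Define an array P with rows indexed by i-element subsets X0 of X and columns indexed by pairs (A,Y) with A ∈ A and Y an (i+1)-element subset of A, where P_{X0,(A,Y)} is the labeled symbol (Y∖X0)_α if X0 ⊂ Y (α the occurrence index in row X0), and ⋆ otherwise. Then P is a C(v−1,i)-regular (λ·C(v,t)·C(k,i+1)/C(k,t), C(v,i), C(v,i)−(i+1), v·λ·C(v−(i+1),t−(i+1))/C(k−(i+1),t−(i+1))) PDA. -/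
open Finset

lemma card_supersets {V : Type*} [DecidableEq V] (B Y : Finset V) (hY : Y ⊆ B) (n : ℕ)
    (hn : Y.card ≤ n) :
    ((B.powersetCard n).filter (fun T => Y ⊆ T)).card
      = (B.card - Y.card).choose (n - Y.card) := by
  rw [← card_sdiff_of_subset hY, ← Finset.card_powersetCard (n - #Y) (B \ Y)]
  apply Finset.card_bij' (fun T _ => T \ Y) (fun U _ => U ∪ Y)
  · intro T hT
    simp only [mem_filter, Finset.mem_powersetCard] at hT
    rw [Finset.mem_powersetCard]
    exact ⟨sdiff_subset_sdiff hT.1.1 le_rfl, by rw [card_sdiff_of_subset hT.2, hT.1.2]⟩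
  · intro U hU
    rw [Finset.mem_powersetCard] at hU
    have hd : Disjoint U Y := (Finset.sdiff_disjoint.mono_left hU.1)
    simp only [mem_filter, Finset.mem_powersetCard]
    refine ⟨⟨Finset.union_subset (hU.1.trans (Finset.sdiff_subset)) hY, ?_⟩,
      Finset.subset_union_right⟩
    rw [Finset.card_union_of_disjoint hd, hU.2]
    omega
  · intro T hT
    simp only [mem_filter] at hT
    exact Finset.sdiff_union_of_subset hT.2
  · intro U hU
    rw [Finset.mem_powersetCard] at hU
    have hd : Disjoint U Y := (Finset.sdiff_disjoint.mono_left hU.1)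
    rw [Finset.union_sdiff_right, Finset.sdiff_eq_self_iff_disjoint.2 hd]

lemma blockcount {V : Type*} [Fintype V] [DecidableEq V]
    (v k t lam i b li1 : ℕ) (blocks : Fin b → Finset V)
    (hv : Fintype.card V = v) (htk : t ≤ k) (hit : i + 1 ≤ t)
    (hcard : ∀ a, (blocks a).card = k)
    (hdes : ∀ T : Finset V, T.card = t →
      (Finset.univ.filter fun a => T ⊆ blocks a).card = lam)
    (hli1 : li1 * Nat.choose (k - (i + 1)) (t - (i + 1)) =
      lam * Nat.choose (v - (i + 1)) (t - (i + 1)))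
    (Y : Finset V) (hY : Y.card = i + 1) :
    (Finset.univ.filter fun a => Y ⊆ blocks a).card = li1 := by
  classical
  have hpos : 0 < Nat.choose (k - (i + 1)) (t - (i + 1)) :=
    Nat.choose_pos (Nat.sub_le_sub_right htk _)
  apply Nat.eq_of_mul_eq_mul_right hpos
  rw [hli1]
  have key : ∀ a : Fin b,
      ((Finset.univ.powersetCard t).filter fun T => Y ⊆ T ∧ T ⊆ blocks a).card
        = if Y ⊆ blocks a then Nat.choose (k - (i+1)) (t - (i+1)) else 0 := by
    intro a
    split_ifs with h
    · have he : (Finset.univ.powersetCard t).filter (fun T => Y ⊆ T ∧ T ⊆ blocks a)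
          = ((blocks a).powersetCard t).filter (fun T => Y ⊆ T) := by
        ext T
        simp only [Finset.mem_filter, Finset.mem_powersetCard, Finset.subset_univ, true_and]
        tauto
      rw [he, card_supersets _ _ h t (by omega), hcard a, hY]
    · rw [Finset.card_eq_zero, Finset.filter_eq_empty_iff]
      intro T _ hT
      exact h (hT.1.trans hT.2)
  have count1 : ∑ a : Fin b, ((Finset.univ.powersetCard t).filter
        fun T => Y ⊆ T ∧ T ⊆ blocks a).card
      = (Finset.univ.filter fun a => Y ⊆ blocks a).card
        * Nat.choose (k - (i+1)) (t - (i+1)) := by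
    rw [Finset.sum_congr rfl (fun a _ => key a), Finset.sum_ite, Finset.sum_const,
      Finset.sum_const]
    simp [mul_comm]
  have count2 : ∑ a : Fin b, ((Finset.univ.powersetCard t).filter
        fun T => Y ⊆ T ∧ T ⊆ blocks a).card
      = lam * Nat.choose (v - (i+1)) (t - (i+1)) := by
    have h1 : ∀ a : Fin b, ((Finset.univ.powersetCard t).filter
          fun T => Y ⊆ T ∧ T ⊆ blocks a).card
        = ∑ T ∈ Finset.univ.powersetCard t, if Y ⊆ T ∧ T ⊆ blocks a then 1 else 0 := by
      intro a; rw [Finset.card_filter]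
    rw [Finset.sum_congr rfl (fun a _ => h1 a), Finset.sum_comm]
    have inner : ∀ T ∈ Finset.univ.powersetCard t,
        (∑ a : Fin b, if Y ⊆ T ∧ T ⊆ blocks a then 1 else 0)
          = if Y ⊆ T then lam else 0 := by
      intro T hT
      rw [Finset.mem_powersetCard] at hT
      split_ifs with h
      · simp only [h, true_and]
        rw [← Finset.card_filter, hdes T hT.2]
      · simp [h]
    rw [Finset.sum_congr rfl inner, Finset.sum_ite, Finset.sum_const, Finset.sum_const]
    have h2 : ((Finset.univ.powersetCard t).filter fun T => Y ⊆ T).card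
        = Nat.choose (v - (i+1)) (t - (i+1)) := by
      rw [card_supersets _ _ (Finset.subset_univ Y) t (by omega), Finset.card_univ, hv, hY]
    simp [h2, mul_comm]
  rw [← count1, count2]

/-- Scheme II: from a `t-(v,k,λ)` design (blocks as an indexed family) and any
`i ∈ [1,t−1]`, one obtains a `C(v−1,i)`-regular
`(λ·C(v,t)·C(k,i+1)/C(k,t), C(v,i), C(v,i)−(i+1), v·λ_{i+1})` PDA, where the
number of blocks is `b` (so `K = b·C(k,i+1)`) and `λ_{i+1} = li1` is
characterized by `li1·C(k−(i+1),t−(i+1)) = λ·C(v−(i+1),t−(i+1))`. -/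
theorem schemeII_regular_pda {V : Type*} [Fintype V] [DecidableEq V]
    (v k t lam i b li1 : ℕ) (blocks : Fin b → Finset V)
    (hv : Fintype.card V = v) (hkv : k < v) (htk : t ≤ k) (ht : 1 ≤ t)
    (hlam : 1 ≤ lam) (hi1 : 1 ≤ i) (hit : i + 1 ≤ t)
    (hcard : ∀ a, (blocks a).card = k)
    (hdes : ∀ T : Finset V, T.card = t →
      (Finset.univ.filter fun a => T ⊆ blocks a).card = lam)
    (hli1 : li1 * Nat.choose (k - (i + 1)) (t - (i + 1)) =
      lam * Nat.choose (v - (i + 1)) (t - (i + 1))) :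
    ∃ P : Fin (Nat.choose v i) → Fin (b * Nat.choose k (i + 1)) →
        Option (Fin (v * li1)),
      -- C1 : each column has exactly `C(v,i) − (i+1)` stars
      (∀ c, (Finset.univ.filter fun j => P j c = none).card
        = Nat.choose v i - (i + 1)) ∧
      -- C2' : each integer appears exactly `g = C(v−1,i)` times
      (∀ s, (Finset.univ.filter
          fun jc : Fin (Nat.choose v i) × Fin (b * Nat.choose k (i + 1)) =>
            P jc.1 jc.2 = some s).card = Nat.choose (v - 1) i) ∧
      -- C3
      (∀ (j1 j2 : Fin (Nat.choose v i)) (c1 c2 : Fin (b * Nat.choose k (i + 1))) s,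
        P j1 c1 = some s → P j2 c2 = some s → (j1, c1) ≠ (j2, c2) →
        j1 ≠ j2 ∧ c1 ≠ c2 ∧ P j1 c2 = none ∧ P j2 c1 = none) := by
  classical
  have hNe : Nonempty V := by
    rw [← Fintype.card_pos_iff, hv]; omega
  -- a choice function extracting the element of a singleton
  set pick : Finset V → V := fun s => if h : s.Nonempty then h.choose else Classical.arbitrary V
    with hpickdef
  have pick_mem : ∀ s : Finset V, s.Nonempty → pick s ∈ s := by
    intro s hs
    simp only [hpickdef, dif_pos hs]
    exact hs.choose_spec
  have pick_singleton : ∀ x : V, pick {x} = x := by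
    intro x
    have := pick_mem {x} ⟨x, Finset.mem_singleton_self x⟩
    simpa using this
  -- equivalences setting up the index sets
  obtain ⟨eR⟩ : Nonempty (Fin (Nat.choose v i)
      ≃ ((Finset.univ : Finset V).powersetCard i : Finset (Finset V))) :=
    ⟨(Fintype.equivFinOfCardEq (by
      rw [Fintype.card_coe, Finset.card_powersetCard, Finset.card_univ, hv])).symm⟩
  obtain ⟨eC⟩ : Nonempty (Fin (b * Nat.choose k (i+1))
      ≃ (Σ a : Fin b, ((blocks a).powersetCard (i+1) : Finset (Finset V)))) :=
    ⟨(Fintype.equivFinOfCardEq (by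
      rw [Fintype.card_sigma]
      have hca : ∀ a : Fin b,
          Fintype.card ((blocks a).powersetCard (i+1) : Finset (Finset V))
            = Nat.choose k (i+1) := fun a => by
        rw [Fintype.card_coe, Finset.card_powersetCard, hcard]
      rw [Finset.sum_congr rfl (fun a _ => hca a), Finset.sum_const, Finset.card_univ,
        Fintype.card_fin, smul_eq_mul])).symm⟩
  obtain ⟨eS⟩ : Nonempty ((V × Fin li1) ≃ Fin (v * li1)) :=
    ⟨Fintype.equivFinOfCardEq (by simp [hv])⟩
  have eB : ∀ Y : Finset V, Y.card = i + 1 → ({a : Fin b // Y ⊆ blocks a} ≃ Fin li1) :=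
    fun Y hY => Fintype.equivFinOfCardEq (by
      rw [Fintype.card_subtype]
      exact blockcount v k t lam i b li1 blocks hv htk hit hcard hdes hli1 Y hY)
  -- accessors
  set X0 : Fin (Nat.choose v i) → Finset V := fun j => (eR j).1
    with hX0def
  have hX0card : ∀ j, (X0 j).card = i :=
    fun j => (Finset.mem_powersetCard.mp (eR j).2).2
  have hX0inj : Function.Injective X0 := by
    intro j1 j2 h
    exact eR.injective (Subtype.ext h)
  set colA : Fin (b * Nat.choose k (i+1)) → Fin b := fun c => (eC c).1 with hcolAdef
  set colY : Fin (b * Nat.choose k (i+1)) → Finset V := fun c => ((eC c).2 : Finset V)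
    with hcolYdef
  have hYsub : ∀ c, colY c ⊆ blocks (colA c) :=
    fun c => (Finset.mem_powersetCard.mp (eC c).2.2).1
  have hYcard : ∀ c, (colY c).card = i + 1 :=
    fun c => (Finset.mem_powersetCard.mp (eC c).2.2).2
  have sigma_ext : ∀ u w : (Σ a : Fin b, ((blocks a).powersetCard (i+1) : Finset (Finset V))),
      u.1 = w.1 → (u.2 : Finset V) = (w.2 : Finset V) → u = w := by
    rintro ⟨a1, y1⟩ ⟨a2, y2⟩ h1 h2
    cases h1
    cases Subtype.ext h2
    rfl
  have col_ext : ∀ c1 c2 : Fin (b * Nat.choose k (i+1)),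
      colA c1 = colA c2 → colY c1 = colY c2 → c1 = c2 := by
    intro c1 c2 h1 h2
    exact eC.injective (sigma_ext _ _ h1 h2)
  have eB_congr : ∀ (Y1 Y2 : Finset V) (h1 : Y1.card = i+1) (h2 : Y2.card = i+1)
      (a1 : {a : Fin b // Y1 ⊆ blocks a}) (a2 : {a : Fin b // Y2 ⊆ blocks a}),
      Y1 = Y2 → a1.1 = a2.1 → eB Y1 h1 a1 = eB Y2 h2 a2 := by
    rintro Y1 Y2 h1 h2 a1 a2 rfl h
    cases Subtype.ext h
    rfl
  have eB_inj : ∀ (Y1 Y2 : Finset V) (h1 : Y1.card = i+1) (h2 : Y2.card = i+1)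
      (a1 : {a : Fin b // Y1 ⊆ blocks a}) (a2 : {a : Fin b // Y2 ⊆ blocks a}),
      Y1 = Y2 → eB Y1 h1 a1 = eB Y2 h2 a2 → a1.1 = a2.1 := by
    rintro Y1 Y2 h1 h2 a1 a2 rfl h
    exact congrArg Subtype.val ((eB Y1 h1).injective h)
  -- the array
  set P : Fin (Nat.choose v i) → Fin (b * Nat.choose k (i + 1)) → Option (Fin (v * li1)) :=
    fun j c => if h : X0 j ⊆ colY c then
      some (eS (pick (colY c \ X0 j), eB (colY c) (hYcard c) ⟨colA c, hYsub c⟩)) else none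
    with hPdef
  have hnone : ∀ j c, P j c = none ↔ ¬ X0 j ⊆ colY c := by
    intro j c
    by_cases h : X0 j ⊆ colY c
    · simp [hPdef, h]
    · simp [hPdef, h]
  have hsome : ∀ j c s, P j c = some s ↔ X0 j ⊆ colY c ∧
      (pick (colY c \ X0 j), eB (colY c) (hYcard c) ⟨colA c, hYsub c⟩) = eS.symm s := by
    intro j c s
    by_cases h : X0 j ⊆ colY c
    · simp only [hPdef, dif_pos h, Option.some.injEq, h, true_and]
      exact eS.apply_eq_iff_eq_symm_apply
    · simp [hPdef, h]
  -- structural facts about a nonempty cell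
  have cell : ∀ j c s, P j c = some s →
      (eS.symm s).1 ∉ X0 j ∧ colY c = insert (eS.symm s).1 (X0 j) ∧
      eB (colY c) (hYcard c) ⟨colA c, hYsub c⟩ = (eS.symm s).2 := by
    intro j c s hjc
    obtain ⟨hsub, heq⟩ := (hsome j c s).mp hjc
    have hc1 : (colY c \ X0 j).card = 1 := by
      rw [Finset.card_sdiff_of_subset hsub, hYcard c, hX0card j]
      omega
    obtain ⟨y, hy⟩ := Finset.card_eq_one.mp hc1
    have hx : (eS.symm s).1 = y := by
      have := congrArg Prod.fst heq
      simp only at this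
      rw [← this, hy, pick_singleton]
    have hymem : y ∈ colY c \ X0 j := hy ▸ Finset.mem_singleton_self y
    rw [Finset.mem_sdiff] at hymem
    have hins : colY c = insert y (X0 j) := by
      have h1 : X0 j ∪ (colY c \ X0 j) = colY c := Finset.union_sdiff_of_subset hsub
      rw [← h1, hy, Finset.union_comm, ← Finset.insert_eq]
    refine ⟨hx ▸ hymem.2, hx ▸ hins, ?_⟩
    have := congrArg Prod.snd heq
    simpa using this
  refine ⟨P, ?_, ?_, ?_⟩
  · -- C1
    intro c
    have h1 : (Finset.univ.filter fun j => P j c = none)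
        = Finset.univ.filter fun j => ¬ X0 j ⊆ colY c :=
      Finset.filter_congr (fun j _ => by rw [hnone])
    rw [h1, Finset.filter_not, Finset.card_sdiff_of_subset (Finset.filter_subset _ _),
      Finset.card_univ, Fintype.card_fin]
    congr 1
    have h2 : (Finset.univ.filter fun j => X0 j ⊆ colY c).card
        = ((colY c).powersetCard i).card := by
      apply Finset.card_bij (fun j _ => X0 j)
      · intro j hj
        rw [Finset.mem_powersetCard]
        exact ⟨(Finset.mem_filter.mp hj).2, hX0card j⟩
      · intro j1 _ j2 _ h
        exact hX0inj h
      · intro Z hZ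
        rw [Finset.mem_powersetCard] at hZ
        have hmem : Z ∈ (Finset.univ : Finset V).powersetCard i :=
          Finset.mem_powersetCard.mpr ⟨Finset.subset_univ Z, hZ.2⟩
        have hXval : X0 (eR.symm ⟨Z, hmem⟩) = Z := by
          simp only [hX0def, Equiv.apply_symm_apply]
        refine ⟨eR.symm ⟨Z, hmem⟩,
          Finset.mem_filter.mpr ⟨Finset.mem_univ _, ?_⟩, hXval⟩
        rw [hXval]
        exact hZ.1
    rw [h2, Finset.card_powersetCard, hYcard c, Nat.choose_succ_self_right]
  · -- C2'
    intro s
    set x : V := (eS.symm s).1 with hxdef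
    set α : Fin li1 := (eS.symm s).2 with hαdef
    have htarget : (((Finset.univ : Finset V).erase x).powersetCard i).card
        = Nat.choose (v - 1) i := by
      rw [Finset.card_powersetCard, Finset.card_erase_of_mem (Finset.mem_univ x),
        Finset.card_univ, hv]
    rw [← htarget]
    apply Finset.card_bij (fun jc _ => X0 jc.1)
    · intro jc hjc
      obtain ⟨hnx, _, _⟩ := cell jc.1 jc.2 s (Finset.mem_filter.mp hjc).2
      rw [Finset.mem_powersetCard, Finset.subset_erase]
      exact ⟨⟨Finset.subset_univ _, hnx⟩, hX0card _⟩
    · intro jc1 hjc1 jc2 hjc2 h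
      obtain ⟨hnx1, hins1, hB1⟩ := cell jc1.1 jc1.2 s (Finset.mem_filter.mp hjc1).2
      obtain ⟨hnx2, hins2, hB2⟩ := cell jc2.1 jc2.2 s (Finset.mem_filter.mp hjc2).2
      have hj : jc1.1 = jc2.1 := hX0inj h
      have hYeq : colY jc1.2 = colY jc2.2 := by rw [hins1, hins2, h]
      have hAeq : colA jc1.2 = colA jc2.2 :=
        eB_inj _ _ (hYcard _) (hYcard _) _ _ hYeq (by rw [hB1, hB2])
      have hc : jc1.2 = jc2.2 := col_ext _ _ hAeq hYeq
      exact Prod.ext hj hc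
    · intro Z hZ
      rw [Finset.mem_powersetCard, Finset.subset_erase] at hZ
      obtain ⟨⟨-, hxZ⟩, hZc⟩ := hZ
      have hmemZ : Z ∈ (Finset.univ : Finset V).powersetCard i :=
        Finset.mem_powersetCard.mpr ⟨Finset.subset_univ Z, hZc⟩
      set Y : Finset V := insert x Z with hYdef
      have hYc : Y.card = i + 1 := by
        rw [hYdef, Finset.card_insert_of_notMem hxZ, hZc]
      set a' : {a : Fin b // Y ⊆ blocks a} := (eB Y hYc).symm α with ha'def
      have hYmem : Y ∈ (blocks a'.1).powersetCard (i+1) :=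
        Finset.mem_powersetCard.mpr ⟨a'.2, hYc⟩
      set j : Fin (Nat.choose v i) := eR.symm ⟨Z, hmemZ⟩ with hjdef
      set c : Fin (b * Nat.choose k (i+1)) := eC.symm ⟨a'.1, ⟨Y, hYmem⟩⟩ with hcdef
      have hXval : X0 j = Z := by simp only [hjdef, hX0def, Equiv.apply_symm_apply]
      have hYval : colY c = Y := by
        show ((eC (eC.symm ⟨a'.1, ⟨Y, hYmem⟩⟩)).2 : Finset V) = Y
        rw [Equiv.apply_symm_apply]
      have hAval : colA c = a'.1 := by
        show (eC (eC.symm ⟨a'.1, ⟨Y, hYmem⟩⟩)).1 = a'.1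
        rw [Equiv.apply_symm_apply]
      refine ⟨(j, c), Finset.mem_filter.mpr ⟨Finset.mem_univ _, ?_⟩, hXval⟩
      rw [hsome]
      have hsub : X0 j ⊆ colY c := by
        rw [hXval, hYval, hYdef]; exact Finset.subset_insert x Z
      refine ⟨hsub, ?_⟩
      have hfst : pick (colY c \ X0 j) = x := by
        rw [hXval, hYval, hYdef, Finset.insert_sdiff_cancel hxZ, pick_singleton]
      have hsnd : eB (colY c) (hYcard c) ⟨colA c, hYsub c⟩ = α := by
        rw [eB_congr (colY c) Y (hYcard c) hYc ⟨colA c, hYsub c⟩ a' hYval hAval,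
          ha'def, Equiv.apply_symm_apply]
      rw [hfst, hsnd]
  · -- C3
    intro j1 j2 c1 c2 s h1 h2 hne
    obtain ⟨hnx1, hins1, hB1⟩ := cell j1 c1 s h1
    obtain ⟨hnx2, hins2, hB2⟩ := cell j2 c2 s h2
    set x : V := (eS.symm s).1 with hxdef
    have hYne : colY c1 ≠ colY c2 := by
      intro hYeq
      have hXeq : X0 j1 = X0 j2 := by
        have e1 : X0 j1 = (colY c1).erase x := by
          rw [hins1, Finset.erase_insert hnx1]
        have e2 : X0 j2 = (colY c2).erase x := by
          rw [hins2, Finset.erase_insert hnx2]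
        rw [e1, e2, hYeq]
      have hj : j1 = j2 := hX0inj hXeq
      have hAeq : colA c1 = colA c2 :=
        eB_inj _ _ (hYcard _) (hYcard _) _ _ hYeq (by rw [hB1, hB2])
      exact hne (by rw [hj, col_ext _ _ hAeq hYeq])
    have hXne : X0 j1 ≠ X0 j2 := by
      intro hXeq
      exact hYne (by rw [hins1, hins2, hXeq])
    refine ⟨fun h => hXne (by rw [h]), fun h => hYne (by rw [h]), ?_, ?_⟩
    · rw [hnone]
      intro hsub
      have hx1 : x ∉ X0 j1 := hnx1
      have : X0 j1 ⊆ (colY c2).erase x := Finset.subset_erase.mpr ⟨hsub, hx1⟩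
      rw [hins2, Finset.erase_insert hnx2] at this
      exact hXne (Finset.eq_of_subset_of_card_le this (le_of_eq ((hX0card _).trans (hX0card _).symm)))
    · rw [hnone]
      intro hsub
      have : X0 j2 ⊆ (colY c1).erase x := Finset.subset_erase.mpr ⟨hsub, hnx2⟩
      rw [hins1, Finset.erase_insert hnx1] at this
      exact hXne (Finset.eq_of_subset_of_card_le this (le_of_eq ((hX0card _).trans (hX0card _).symm))).symm
end

section
/- For integers v > t ≥ 1, the PDA with parameters K = C(v,t), F = C(v,t−1), Z = C(v,t−1) − t, S = v (obtained from Scheme II with λ = 1, i = t−1) meets the iterated-ceiling lower bound with equality: the bound evaluates to exactly v. -/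
lemma aux_t_le (v t : ℕ) (ht : 1 ≤ t) (htv : t ≤ v) : t ≤ Nat.choose v (t - 1) := by
  have h1 : Nat.choose t (t - 1) = t := by
    have := Nat.choose_symm (n := t) (k := 1) ht
    simpa using this
  calc t = Nat.choose t (t-1) := h1.symm
    _ ≤ Nat.choose v (t-1) := Nat.choose_le_choose _ htv

lemma aux_key (v : ℕ) : ∀ k, 1 ≤ k → k + 1 ≤ v → k * (v - k) + 1 ≤ Nat.choose v k := by
  induction v with
  | zero => intro k _ h; omega
  | succ n ih =>
    intro k hk hkv
    rcases Nat.eq_or_lt_of_le hkv with h | h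
    · have hk' : k = n := by omega
      subst hk'
      have h0 : Nat.choose (k+1) k = k + 1 := by simp
      have h1 : k + 1 - k = 1 := by omega
      rw [h0, h1]; omega
    · obtain ⟨j, rfl⟩ : ∃ j, k = j + 1 := ⟨k - 1, by omega⟩
      rw [Nat.choose_succ_succ]
      have h1 := ih (j+1) (by omega) (by omega)
      have h3 : (j+1) * (n + 1 - (j+1)) = (j+1) * (n - (j+1)) + (j+1) := by
        have : n + 1 - (j+1) = (n - (j+1)) + 1 := by omega
        rw [this]; ring
      have h4 : j + 1 ≤ Nat.choose n j := by
        rcases Nat.eq_zero_or_pos j with rfl | hj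
        · simp
        · have := aux_t_le n (j+1) (by omega) (by omega)
          simpa using this
      simp only [Nat.succ_eq_add_one] at *
      omega

/-- For `v > t ≥ 1`, the PDA with parameters `K = C(v,t)`, `F = C(v,t−1)`,
`Z = C(v,t−1) − t`, `S = v` (Scheme II with `λ = 1`, `i = t−1`) meets the
iterated-ceiling lower bound with equality: the bound evaluates to exactly `v`. -/
theorem schemeII_minimal_load (v t : ℕ) (ht : 1 ≤ t) (htv : t < v) :
    ∑ m ∈ Finset.range (Nat.choose v (t - 1) - (Nat.choose v (t - 1) - t)),
      nestedTerm (Nat.choose v t) (Nat.choose v (t - 1)) (Nat.choose v (t - 1) - t) m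
      = (v : ℤ) := by
  set F := Nat.choose v (t - 1) with hF
  set K := Nat.choose v t with hK
  have htF : t ≤ F := aux_t_le v t ht htv.le
  have hFpos : 0 < F := by omega
  have hrange : F - (F - t) = t := by omega
  -- cast facts
  have hZcast : ((F - t : ℕ) : ℚ) = (F : ℚ) - (t : ℚ) := by
    push_cast [htF]; ring
  have hFZ : (F : ℚ) - ((F - t : ℕ) : ℚ) = (t : ℚ) := by rw [hZcast]; ring
  -- choose identity: K * t = F * (v - t + 1)
  have hchoose : K * t = F * (v - t + 1) := by
    have h := Nat.choose_succ_right_eq v (t - 1)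
    have h1 : t - 1 + 1 = t := by omega
    have h2 : v - (t - 1) = v - t + 1 := by omega
    rw [h1, h2] at h
    exact h
  -- term 0
  have hterm0 : nestedTerm K F (F - t) 0 = ((v - t + 1 : ℕ) : ℤ) := by
    show ⌈((K : ℚ) * ((F : ℚ) - ((F - t : ℕ) : ℚ))) / (F : ℚ)⌉ = _
    rw [hFZ]
    have : ((K : ℚ) * (t : ℚ)) / (F : ℚ) = ((v - t + 1 : ℕ) : ℚ) := by
      have hq : (K : ℚ) * (t : ℚ) = (F : ℚ) * ((v - t + 1 : ℕ) : ℚ) := by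
        exact_mod_cast hchoose
      rw [div_eq_iff (by exact_mod_cast hFpos.ne' : (F : ℚ) ≠ 0)]
      linarith [hq]
    rw [this]
    exact_mod_cast Int.ceil_intCast ((v - t + 1 : ℕ) : ℤ)
  -- later terms are 1
  have hterms : ∀ m, m < t - 1 → nestedTerm K F (F - t) (m + 1) = 1 := by
    intro m
    induction m with
    | zero =>
      intro hm
      have ht2 : 2 ≤ t := by omega
      have htq : (2:ℚ) ≤ (t:ℚ) := by exact_mod_cast ht2
      have hFq : (2:ℚ) ≤ (F:ℚ) := by exact_mod_cast le_trans ht2 htF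
      have hvq : (t:ℚ) < (v:ℚ) := by exact_mod_cast htv
      have hkey : ((t : ℚ) - 1) * ((v : ℚ) - (t : ℚ) + 1) ≤ (F : ℚ) - 1 := by
        have h := aux_key v (t - 1) (by omega) (by omega)
        have hq : (((t-1) * (v - (t-1)) + 1 : ℕ) : ℚ) ≤ (F : ℚ) := by exact_mod_cast h
        have hc1 : ((t - 1 : ℕ) : ℚ) = (t : ℚ) - 1 := by push_cast [ht]; ring
        have hc2 : ((v - (t - 1) : ℕ) : ℚ) = (v : ℚ) - (t : ℚ) + 1 := by
          have h1 : t - 1 ≤ v := by omega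
          push_cast [h1]
          rw [hc1]; ring
        push_cast at hq
        rw [hc1, hc2] at hq
        linarith
      show ⌈(((F : ℚ) - ((F - t : ℕ) : ℚ) - ((0 : ℕ) + 1 : ℚ)) / ((F : ℚ) - ((0 : ℕ) + 1 : ℚ))) *
        ((nestedTerm K F (F - t) 0 : ℤ) : ℚ)⌉ = 1
      have goal_eq : (((F : ℚ) - ((F - t : ℕ) : ℚ) - ((0 : ℕ) + 1 : ℚ)) / ((F : ℚ) - ((0 : ℕ) + 1 : ℚ))) *
          ((nestedTerm K F (F - t) 0 : ℤ) : ℚ)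
          = ((t:ℚ)-1)/((F:ℚ)-1) * ((v:ℚ)-(t:ℚ)+1) := by
        rw [hterm0, hFZ]
        push_cast [htv.le]
        ring
      rw [goal_eq, Int.ceil_eq_iff]
      constructor
      · norm_num
        apply mul_pos (div_pos (by linarith) (by linarith))
        linarith
      · norm_num
        rw [div_mul_eq_mul_div, div_le_one (by linarith)]
        linarith
    | succ n ih =>
      intro hm
      have hprev : nestedTerm K F (F - t) (n + 1) = 1 := ih (by omega)
      have hn3 : ((n : ℚ) + 3) ≤ (t : ℚ) := by exact_mod_cast (by omega : n + 3 ≤ t)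
      have hFt : (t : ℚ) ≤ (F : ℚ) := by exact_mod_cast htF
      show ⌈(((F : ℚ) - ((F - t : ℕ) : ℚ) - (((n + 1 : ℕ) : ℚ) + 1)) / ((F : ℚ) - (((n + 1 : ℕ) : ℚ) + 1))) *
        ((nestedTerm K F (F - t) (n + 1) : ℤ) : ℚ)⌉ = 1
      have goal_eq : (((F : ℚ) - ((F - t : ℕ) : ℚ) - (((n + 1 : ℕ) : ℚ) + 1)) / ((F : ℚ) - (((n + 1 : ℕ) : ℚ) + 1))) *
          ((nestedTerm K F (F - t) (n + 1) : ℤ) : ℚ)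
          = ((t : ℚ) - ((n : ℚ) + 2)) / ((F : ℚ) - ((n : ℚ) + 2)) := by
        rw [hprev, hFZ]
        push_cast
        ring
      rw [goal_eq, Int.ceil_eq_iff]
      constructor
      · norm_num
        exact div_pos (by linarith) (by linarith)
      · norm_num
        rw [div_le_one (by linarith)]
        linarith
  -- assemble the sum
  rw [hrange]
  have hsum := Finset.sum_range_succ' (fun m => nestedTerm K F (F - t) m) (t - 1)
  have ht1 : t - 1 + 1 = t := by omega
  rw [ht1] at hsum
  rw [hsum, hterm0]
  have hones : ∑ i ∈ Finset.range (t - 1), nestedTerm K F (F - t) (i + 1)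
      = (t - 1 : ℕ) := by
    rw [Finset.sum_congr rfl (fun i hi => hterms i (Finset.mem_range.mp hi))]
    simp
  rw [hones]
  have h1 : v - t + 1 ≥ 1 := by omega
  push_cast
  omega
end

section
/- For integers v > t ≥ 1, the PDA with parameters K = C(v,t−1), F = C(v,t), Z = C(v,t) − (v−t+1), S = v (the transpose of the Scheme II PDA with λ = 1, i = t−1) meets the iterated-ceiling lower bound with equality: K(F−Z)/F = t exactly, and the bound evaluates to t + (v−t) = v. -/
lemma choose_lb : ∀ v t : ℕ, t ≤ v → t * (v - t) + 1 ≤ Nat.choose v t := by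
  intro v
  induction v with
  | zero => intro t h; interval_cases t; simp
  | succ v ih =>
    intro t h
    rcases Nat.eq_zero_or_pos t with rfl | ht
    · simp
    rcases eq_or_lt_of_le h with rfl | h'
    · simp
    have htv : t ≤ v := Nat.lt_succ_iff.mp h'
    have h1 := ih t htv
    have h2 := ih (t - 1) (le_trans (Nat.sub_le _ _) htv)
    have hC : Nat.choose (v+1) t = Nat.choose v t + Nat.choose v (t-1) := by
      rw [← Nat.succ_pred_eq_of_pos ht, Nat.choose_succ_succ]
      simp [Nat.succ_pred_eq_of_pos ht]
      ring
    -- need : t * (v + 1 - t) + 1 ≤ C v t + C v (t-1)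
    have key : (t - 1) * (v - (t - 1)) + 1 ≥ t := by
      rcases Nat.eq_or_lt_of_le ht with rfl | ht2
      · simp
      · have : 1 ≤ t - 1 := by omega
        have : v - (t - 1) ≥ 1 := by omega
        calc t ≤ (t-1) * 1 + 1 := by omega
          _ ≤ (t-1) * (v - (t-1)) + 1 := by
            exact Nat.add_le_add_right (Nat.mul_le_mul_left _ this) 1
    have : t * (v + 1 - t) + 1 = t * (v - t) + 1 + t := by
      have : v + 1 - t = (v - t) + 1 := by omega
      rw [this]; ring
    omega


/-- For `v > t ≥ 1`, the PDA with parameters `K = C(v,t−1)`, `F = C(v,t)`,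
`Z = C(v,t) − (v−t+1)`, `S = v` (the transpose of the Scheme II PDA with
`λ = 1`, `i = t−1`) meets the iterated-ceiling lower bound with equality:
`K(F−Z)/F = t` exactly, and the bound evaluates to `t + (v−t) = v`. -/
theorem schemeII_transpose_minimal_load (v t : ℕ) (ht : 1 ≤ t) (htv : t < v) :
    ((Nat.choose v (t - 1) : ℚ) * ((v : ℚ) - (t : ℚ) + 1)) / (Nat.choose v t : ℚ)
      = (t : ℚ) ∧
    ∑ m ∈ Finset.range (Nat.choose v t - (Nat.choose v t - (v - t + 1))),
      nestedTerm (Nat.choose v (t - 1)) (Nat.choose v t)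
        (Nat.choose v t - (v - t + 1)) m = (v : ℤ) := by
  set K := Nat.choose v (t - 1) with hK
  set F := Nat.choose v t with hF
  set n := v - t with hn
  have hn1 : 1 ≤ n := by omega
  have hlb : t * n + 1 ≤ F := choose_lb v t htv.le
  have hFn : n + 1 ≤ F := by nlinarith
  set Z := F - (n + 1) with hZ
  have hid : F * t = K * (n + 1) := by
    have := Nat.choose_succ_right_eq v (t - 1)
    have h1 : t - 1 + 1 = t := by omega
    have h2 : v - (t - 1) = n + 1 := by omega
    rw [h1, h2] at this
    exact this
  have hidQ : (F : ℚ) * t = (K : ℚ) * ((n : ℚ) + 1) := by exact_mod_cast hid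
  have hvQ : (v : ℚ) - (t : ℚ) + 1 = (n : ℚ) + 1 := by
    have : (v : ℚ) = (t : ℚ) + (n : ℚ) := by exact_mod_cast (by omega : v = t + n)
    rw [this]; ring
  have hFpos : (0 : ℚ) < F := by exact_mod_cast (by omega : 0 < F)
  have hZQ : (F : ℚ) - (Z : ℚ) = (n : ℚ) + 1 := by
    have : (Z : ℚ) = (F : ℚ) - ((n : ℚ) + 1) := by
      rw [hZ]; push_cast [Nat.cast_sub hFn]; ring
    rw [this]; ring
  have hsub : F - (F - (n + 1)) = n + 1 := by omega
  have term0 : nestedTerm K F Z 0 = (t : ℤ) := by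
    show ⌈((K : ℚ) * ((F : ℚ) - (Z : ℚ))) / (F : ℚ)⌉ = (t : ℤ)
    rw [hZQ]
    have : (K : ℚ) * ((n : ℚ) + 1) / (F : ℚ) = (t : ℚ) := by
      rw [← hidQ]; field_simp
    rw [this]
    exact_mod_cast Int.ceil_intCast (t : ℤ)
  have termSucc : ∀ m, m < n → nestedTerm K F Z (m + 1) = 1 := by
    intro m
    induction m with
    | zero =>
      intro _
      show ⌈(((F : ℚ) - (Z : ℚ) - ((0 : ℕ) + 1)) / ((F : ℚ) - ((0 : ℕ) + 1))) *
        ((nestedTerm K F Z 0 : ℤ) : ℚ)⌉ = 1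
      rw [term0, hZQ]
      push_cast
      have hden : (0 : ℚ) < (F : ℚ) - 1 := by
        have : (2 : ℚ) ≤ F := by exact_mod_cast (by omega : 2 ≤ F)
        linarith
      rw [Int.ceil_eq_iff]
      have hnum : (0 : ℚ) < (n : ℚ) * (t : ℚ) := by
        have h1 : (1 : ℚ) ≤ n := by exact_mod_cast hn1
        have h2 : (1 : ℚ) ≤ t := by exact_mod_cast ht
        nlinarith
      have hle : (n : ℚ) * (t : ℚ) ≤ (F : ℚ) - 1 := by
        have : (t * n + 1 : ℚ) ≤ F := by exact_mod_cast hlb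
        nlinarith
      have h1 : (1 : ℚ) ≤ n := by exact_mod_cast hn1
      have h2 : (1 : ℚ) ≤ t := by exact_mod_cast ht
      constructor
      · push_cast
        rw [div_mul_eq_mul_div]
        have : (0 : ℚ) < (↑n + 1 - (0 + 1)) * ↑t / (↑F - (0 + 1)) :=
          div_pos (by nlinarith) (by linarith)
        linarith
      · push_cast
        rw [div_mul_eq_mul_div, div_le_one (by linarith : (0:ℚ) < (F : ℚ) - (0 + 1))]
        nlinarith
    | succ m ih =>
      intro hm
      have hprev : nestedTerm K F Z (m + 1) = 1 := ih (by omega)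
      show ⌈(((F : ℚ) - (Z : ℚ) - (((m + 1 : ℕ) : ℚ) + 1)) / ((F : ℚ) - (((m + 1 : ℕ) : ℚ) + 1))) *
        ((nestedTerm K F Z (m + 1) : ℤ) : ℚ)⌉ = 1
      rw [hprev, hZQ]
      push_cast
      have hden : (0 : ℚ) < (F : ℚ) - ((m : ℚ) + 1) - 1 := by
        have : ((m : ℚ) + 3) ≤ F := by exact_mod_cast (by omega : m + 3 ≤ F)
        linarith
      have hnum : (0 : ℚ) < (n : ℚ) + 1 - ((m : ℚ) + 1 + 1) := by
        have : ((m : ℚ) + 2) ≤ n := by exact_mod_cast (by omega : m + 2 ≤ n)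
        linarith
      have hle : (n : ℚ) + 1 - ((m : ℚ) + 1) - 1 ≤ (F : ℚ) - ((m : ℚ) + 1) - 1 := by
        have : ((n : ℚ) + 1) ≤ F := by exact_mod_cast hFn
        linarith
      rw [Int.ceil_eq_iff]
      constructor
      · push_cast
        rw [mul_one]
        have : (0 : ℚ) < (↑n + 1 - (↑m + 1 + 1)) / (↑F - (↑m + 1 + 1)) :=
          div_pos (by linarith) (by linarith)
        linarith
      · push_cast
        rw [mul_one, div_le_one (by linarith : (0:ℚ) < (F : ℚ) - ((m : ℚ) + 1 + 1))]
        linarith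
  constructor
  · rw [hvQ, div_eq_iff (ne_of_gt hFpos), ← hidQ]; ring
  · rw [hsub, Finset.sum_range_succ', term0]
    rw [Finset.sum_congr rfl (fun m hm => termSucc m (Finset.mem_range.mp hm))]
    simp
    omega
end

section
/- Given a (K,F,Z,S) PDA, the associated coded caching scheme is correct: for any demand vector d, every user k can decode all F packets of its requested file; specifically, for each integer entry p_{j,k} = s, user k can recover packet W^{d_k}_j from the transmission ⊕_{p_{j',k'}=s} W^{d_{k'}}_{j'} together with its cache contents {W^n_{j'} : p_{j',k} = ⋆}. -/
/-- Correctness of the coded caching scheme associated with a `(K,F,Z,S)` PDA: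
packets live in an additive group `G` (sums playing the role of XOR).  For any
demand `d` and any integer entry `P j k = s`, every other position `(j',k')`
with the same integer `s` satisfies `P j' k = ⋆`, so its packet is cached by
user `k`; consequently user `k` recovers the packet `W (d k) j` as the
broadcast for `s` minus the sum of its cached packets appearing in it. -/
theorem pda_scheme_correct (K F Z S N : ℕ) {G : Type*} [AddCommGroup G]
    (P : Fin F → Fin K → Option (Fin S))
    (hC1 : ∀ c : Fin K, (Finset.univ.filter fun j : Fin F => P j c = none).card = Z)
    (hC2 : ∀ s : Fin S, ∃ j c, P j c = some s)
    (hC3 : ∀ (j1 j2 : Fin F) (c1 c2 : Fin K) (s : Fin S),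
      P j1 c1 = some s → P j2 c2 = some s → (j1, c1) ≠ (j2, c2) →
      j1 ≠ j2 ∧ c1 ≠ c2 ∧ P j1 c2 = none ∧ P j2 c1 = none)
    (d : Fin K → Fin N) (W : Fin N → Fin F → G)
    (j : Fin F) (k : Fin K) (s : Fin S) (hjk : P j k = some s) :
    (∀ (j' : Fin F) (k' : Fin K), P j' k' = some s → k' ≠ k → P j' k = none) ∧
    W (d k) j =
      (∑ p ∈ Finset.univ.filter
          (fun p : Fin F × Fin K => P p.1 p.2 = some s), W (d p.2) p.1)
      - ∑ p ∈ Finset.univ.filter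
          (fun p : Fin F × Fin K => P p.1 p.2 = some s ∧ p.2 ≠ k),
          W (d p.2) p.1 := by
  constructor
  · intro j' k' hj' hk'
    exact (hC3 j' j k' k s hj' hjk (by simp [hk'])).2.2.1
  · have hset : (Finset.univ.filter
        (fun p : Fin F × Fin K => P p.1 p.2 = some s ∧ p.2 ≠ k)) =
        (Finset.univ.filter
        (fun p : Fin F × Fin K => P p.1 p.2 = some s)).erase (j, k) := by
      ext p
      simp only [Finset.mem_erase, Finset.mem_filter, Finset.mem_univ, true_and]
      constructor
      · rintro ⟨hp, hk'⟩
        refine ⟨fun h => hk' (by rw [h]), hp⟩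
      · rintro ⟨hne, hp⟩
        refine ⟨hp, fun hk' => ?_⟩
        have hne' : (p.1, p.2) ≠ (j, k) := by simpa using hne
        have := (hC3 p.1 j p.2 k s hp hjk hne').2.1
        exact this hk'
    rw [hset]
    have hmem : (j, k) ∈ (Finset.univ.filter
        (fun p : Fin F × Fin K => P p.1 p.2 = some s)) := by
      simp [hjk]
    rw [eq_sub_iff_add_eq, Finset.add_sum_erase _ (fun p : Fin F × Fin K => W (d p.2) p.1) hmem]
end

section
/- In the HPDA construction from Scheme I, each subarray P^{(A)} (columns indexed by (k−i)-subsets B of a fixed block A, rows by x ∈ X, entry A∖(B∪{x}) if x ∈ A∖B, else ⋆) is itself a (C(k,k−i), v, v−i, |S_A|) PDA, and the number of distinct non-star symbols in P^{(A)} is at most C(k,i−1)·λ·C(v−i,t−i)/C(k−i,t−i). -/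
/-- Auxiliary: the number of sets `W` with `T ⊆ W ⊆ A` and `|W| = |T| + s`
is `C(|A \ T|, s)`. -/
lemma hpda_card_between {V : Type*} [DecidableEq V] (T A : Finset V) (hTA : T ⊆ A)
    (s : ℕ) :
    ((A.powersetCard (T.card + s)).filter (fun W => T ⊆ W)).card
      = (A \ T).card.choose s := by
  rw [← Finset.card_powersetCard]
  apply Finset.card_bij' (fun W _ => W \ T) (fun U _ => U ∪ T)
  · intro W hW
    simp only [Finset.mem_filter, Finset.mem_powersetCard] at hW
    simp only [Finset.mem_powersetCard]
    exact ⟨Finset.sdiff_subset_sdiff hW.1.1 le_rfl,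
      by rw [Finset.card_sdiff_of_subset hW.2, hW.1.2]; omega⟩
  · intro U hU
    simp only [Finset.mem_powersetCard] at hU
    simp only [Finset.mem_filter, Finset.mem_powersetCard]
    have hdisj : Disjoint U T := Finset.disjoint_of_subset_left hU.1 Finset.sdiff_disjoint
    refine ⟨⟨Finset.union_subset (hU.1.trans Finset.sdiff_subset) hTA, ?_⟩,
      Finset.subset_union_right⟩
    rw [Finset.card_union_of_disjoint hdisj, hU.2]; omega
  · intro W hW
    simp only [Finset.mem_filter] at hW
    exact Finset.sdiff_union_of_subset hW.2
  · intro U hU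
    simp only [Finset.mem_powersetCard] at hU
    have hdisj : Disjoint U T := Finset.disjoint_of_subset_left hU.1 Finset.sdiff_disjoint
    exact Finset.union_sdiff_cancel_right hdisj

/-- Auxiliary: in a `t-(v,k,λ)` design, every `i`-subset `T` lies in exactly
`λ_i = λ·C(v−i,t−i)/C(k−i,t−i)` blocks. -/
lemma hpda_blocks_through {V : Type*} [Fintype V] [DecidableEq V]
    (v k t lam i b li : ℕ) (blocks : Fin b → Finset V)
    (hv : Fintype.card V = v) (htk : t ≤ k) (hit : i ≤ t)
    (hcard : ∀ a, (blocks a).card = k)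
    (hdes : ∀ T : Finset V, T.card = t →
      (Finset.univ.filter fun a => T ⊆ blocks a).card = lam)
    (hli : li * Nat.choose (k - i) (t - i) = lam * Nat.choose (v - i) (t - i))
    (T : Finset V) (hT : T.card = i) :
    (Finset.univ.filter fun a => T ⊆ blocks a).card = li := by
  classical
  set N := (Finset.univ.filter fun a => T ⊆ blocks a).card with hN
  have key : N * Nat.choose (k - i) (t - i) = lam * Nat.choose (v - i) (t - i) := by
    have hswap :
        ∑ a : Fin b, ∑ W ∈ (Finset.univ : Finset V).powersetCard t,
            (if T ⊆ W ∧ W ⊆ blocks a then 1 else 0)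
          = ∑ W ∈ (Finset.univ : Finset V).powersetCard t, ∑ a : Fin b,
            (if T ⊆ W ∧ W ⊆ blocks a then 1 else 0) := Finset.sum_comm
    have lhs : ∑ a : Fin b, ∑ W ∈ (Finset.univ : Finset V).powersetCard t,
        (if T ⊆ W ∧ W ⊆ blocks a then 1 else 0) = N * Nat.choose (k - i) (t - i) := by
      have hpt : ∀ a : Fin b, (∑ W ∈ (Finset.univ : Finset V).powersetCard t,
          if T ⊆ W ∧ W ⊆ blocks a then 1 else 0)
          = if T ⊆ blocks a then Nat.choose (k - i) (t - i) else 0 := by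
        intro a
        rw [← Finset.card_filter]
        by_cases hTa : T ⊆ blocks a
        · rw [if_pos hTa]
          have heq : ((Finset.univ : Finset V).powersetCard t).filter
              (fun W => T ⊆ W ∧ W ⊆ blocks a)
              = ((blocks a).powersetCard t).filter (fun W => T ⊆ W) := by
            ext W
            simp only [Finset.mem_filter, Finset.mem_powersetCard, Finset.subset_univ,
              true_and]
            tauto
          rw [heq]
          have := hpda_card_between T (blocks a) hTa (t - i)
          rw [hT] at this
          rw [show i + (t - i) = t by omega] at this
          rw [this, Finset.card_sdiff_of_subset hTa, hcard, hT]
        · rw [if_neg hTa]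
          rw [Finset.card_eq_zero, Finset.filter_eq_empty_iff]
          intro W _ h
          exact absurd (h.1.trans h.2) hTa
      rw [Finset.sum_congr rfl (fun a _ => hpt a), ← Finset.sum_filter,
        Finset.sum_const, smul_eq_mul]
    have rhs : ∑ W ∈ (Finset.univ : Finset V).powersetCard t, ∑ a : Fin b,
        (if T ⊆ W ∧ W ⊆ blocks a then 1 else 0)
        = Nat.choose (v - i) (t - i) * lam := by
      have hpt : ∀ W ∈ (Finset.univ : Finset V).powersetCard t,
          (∑ a : Fin b, if T ⊆ W ∧ W ⊆ blocks a then 1 else 0)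
          = if T ⊆ W then lam else 0 := by
        intro W hW
        rw [Finset.mem_powersetCard] at hW
        rw [← Finset.card_filter]
        by_cases hTW : T ⊆ W
        · rw [if_pos hTW]
          have heq : (Finset.univ.filter fun a : Fin b => T ⊆ W ∧ W ⊆ blocks a)
              = Finset.univ.filter fun a : Fin b => W ⊆ blocks a := by
            ext a; simp [hTW]
          rw [heq, hdes W hW.2]
        · rw [if_neg hTW]
          rw [Finset.card_eq_zero, Finset.filter_eq_empty_iff]
          intro a _ h
          exact absurd h.1 hTW
      rw [Finset.sum_congr rfl hpt, ← Finset.sum_filter, Finset.sum_const,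
        smul_eq_mul]
      have := hpda_card_between T (Finset.univ : Finset V) (Finset.subset_univ T) (t - i)
      rw [hT, show i + (t - i) = t by omega] at this
      rw [this]
      congr 1
      rw [Finset.card_sdiff_of_subset (Finset.subset_univ T), hT, Finset.card_univ, hv]
    rw [lhs, rhs] at hswap
    rw [hswap, Nat.mul_comm]
  have hpos : 0 < Nat.choose (k - i) (t - i) := Nat.choose_pos (by omega)
  have : N * Nat.choose (k - i) (t - i) = li * Nat.choose (k - i) (t - i) := by
    rw [key, hli]
  exact Nat.eq_of_mul_eq_mul_right hpos this

/-- The subarray `P^{(A)}` of the Scheme I PDA for a fixed block `A = blocks a0`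
(columns indexed by the `(k−i)`-subsets `B` of `A`, rows by points `x`, entry
`A∖(B∪{x})` if `x ∈ A∖B`, else `⋆`) is itself a `(C(k,k−i), v, v−i, |S_A|)`
PDA, and the number of distinct non-star labeled symbols
`(A∖(B∪{x}), α)` (with `α` the occurrence index of the symbol from left to
right, realized by counting blocks `a' ≤ a0` containing `A∖B`) is at most
`C(k,i−1)·λ_i`, where `λ_i·C(k−i,t−i) = λ·C(v−i,t−i)`. -/
theorem hpda_subarray_pda {V : Type*} [Fintype V] [DecidableEq V]
    (v k t lam i b li : ℕ) (blocks : Fin b → Finset V)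
    (hv : Fintype.card V = v) (hkv : k < v) (htk : t ≤ k) (ht : 1 ≤ t)
    (hlam : 1 ≤ lam) (hi1 : 1 ≤ i) (hit : i ≤ t)
    (hcard : ∀ a, (blocks a).card = k)
    (hdes : ∀ T : Finset V, T.card = t →
      (Finset.univ.filter fun a => T ⊆ blocks a).card = lam)
    (hli : li * Nat.choose (k - i) (t - i) = lam * Nat.choose (v - i) (t - i))
    (a0 : Fin b) :
    -- number of columns of `P^{(A)}` is `K₂ = C(k,k−i)`
    Fintype.card {B : Finset V // B ⊆ blocks a0 ∧ B.card = k - i}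
      = Nat.choose k (k - i) ∧
    -- C1 : each column of `P^{(A)}` has exactly `v − i` stars
    (∀ B : {B : Finset V // B ⊆ blocks a0 ∧ B.card = k - i},
      (Finset.univ.filter fun x : V => ¬(x ∈ blocks a0 ∧ x ∉ B.1)).card = v - i) ∧
    -- C3 : equal non-star symbols at distinct positions lie in distinct
    -- rows and columns, with stars at the cross positions
    (∀ (x1 x2 : V) (B1 B2 : {B : Finset V // B ⊆ blocks a0 ∧ B.card = k - i}),
      (x1, B1) ≠ (x2, B2) →
      x1 ∈ blocks a0 → x1 ∉ B1.1 → x2 ∈ blocks a0 → x2 ∉ B2.1 →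
      blocks a0 \ insert x1 B1.1 = blocks a0 \ insert x2 B2.1 →
      x1 ≠ x2 ∧ B1 ≠ B2 ∧
        ¬(x1 ∈ blocks a0 ∧ x1 ∉ B2.1) ∧ ¬(x2 ∈ blocks a0 ∧ x2 ∉ B1.1)) ∧
    -- the number of distinct labeled symbols appearing in `P^{(A)}` is at most
    -- `C(k,i−1)·λ_i`
    ((Finset.univ.filter
        (fun p : V × {B : Finset V // B ⊆ blocks a0 ∧ B.card = k - i} =>
          p.1 ∈ blocks a0 ∧ p.1 ∉ p.2.1)).image
      (fun p =>
        (blocks a0 \ insert p.1 p.2.1,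
          (Finset.univ.filter
            (fun a' : Fin b => a' ≤ a0 ∧ blocks a0 \ p.2.1 ⊆ blocks a')).card))).card
      ≤ Nat.choose k (i - 1) * li := by
  have hik : i ≤ k := hit.trans htk
  refine ⟨?_, ?_, ?_, ?_⟩
  · -- number of columns
    rw [Fintype.card_subtype]
    have : (Finset.univ.filter fun B : Finset V => B ⊆ blocks a0 ∧ B.card = k - i)
        = (blocks a0).powersetCard (k - i) := by
      ext B; simp [Finset.mem_powersetCard]
    rw [this, Finset.card_powersetCard, hcard]
  · -- C1
    intro B
    have h1 : (Finset.univ.filter fun x : V => x ∈ blocks a0 ∧ x ∉ B.1)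
        = blocks a0 \ B.1 := by
      ext x; simp
    rw [Finset.filter_not, Finset.card_sdiff_of_subset (Finset.filter_subset _ _), h1,
      Finset.card_univ, hv, Finset.card_sdiff_of_subset B.2.1, hcard, B.2.2]
    omega
  · -- C3
    intro x1 x2 B1 B2 hne hx1 hx1' hx2 hx2' hsym
    have hs1 : insert x1 B1.1 ⊆ blocks a0 := Finset.insert_subset hx1 B1.2.1
    have hs2 : insert x2 B2.1 ⊆ blocks a0 := Finset.insert_subset hx2 B2.2.1
    have hins : insert x1 B1.1 = insert x2 B2.1 := by
      have := congrArg (fun S => blocks a0 \ S) hsym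
      simpa [Finset.sdiff_sdiff_self_left, Finset.inter_eq_right.mpr hs1,
        Finset.inter_eq_right.mpr hs2] using this
    have hxne : x1 ≠ x2 := by
      intro h
      subst h
      apply hne
      have : B1.1 = B2.1 := by
        have := congrArg (fun S => Finset.erase S x1) hins
        simpa [Finset.erase_insert hx1', Finset.erase_insert hx2'] using this
      simp [Prod.ext_iff, Subtype.ext this]
    have h12 : x1 ∈ B2.1 := by
      have : x1 ∈ insert x2 B2.1 := hins ▸ Finset.mem_insert_self x1 B1.1
      rcases Finset.mem_insert.mp this with h | h
      · exact absurd h hxne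
      · exact h
    have h21 : x2 ∈ B1.1 := by
      have : x2 ∈ insert x1 B1.1 := hins.symm ▸ Finset.mem_insert_self x2 B2.1
      rcases Finset.mem_insert.mp this with h | h
      · exact absurd h.symm hxne
      · exact h
    exact ⟨hxne, fun h => hx2' (h ▸ h21), fun h => h.2 h12, fun h => h.2 h21⟩
  · -- symbol count bound
    have hsub : ((Finset.univ.filter
          (fun p : V × {B : Finset V // B ⊆ blocks a0 ∧ B.card = k - i} =>
            p.1 ∈ blocks a0 ∧ p.1 ∉ p.2.1)).image
        (fun p =>
          (blocks a0 \ insert p.1 p.2.1,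
            (Finset.univ.filter
              (fun a' : Fin b => a' ≤ a0 ∧ blocks a0 \ p.2.1 ⊆ blocks a')).card)))
        ⊆ ((blocks a0).powersetCard (i - 1)) ×ˢ Finset.Icc 1 li := by
      intro y hy
      rw [Finset.mem_image] at hy
      obtain ⟨p, hp, rfl⟩ := hy
      rw [Finset.mem_filter] at hp
      obtain ⟨-, hx, hxB⟩ := hp
      have hBsub := p.2.2.1
      have hBcard := p.2.2.2
      have hins : insert p.1 p.2.1 ⊆ blocks a0 := Finset.insert_subset hx hBsub
      rw [Finset.mem_product]
      constructor
      · rw [Finset.mem_powersetCard]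
        refine ⟨Finset.sdiff_subset, ?_⟩
        rw [Finset.card_sdiff_of_subset hins, Finset.card_insert_of_notMem hxB, hcard, hBcard]
        omega
      · have hTcard : (blocks a0 \ p.2.1).card = i := by
          rw [Finset.card_sdiff_of_subset hBsub, hcard, hBcard]; omega
        have hle : (Finset.univ.filter
              (fun a' : Fin b => a' ≤ a0 ∧ blocks a0 \ p.2.1 ⊆ blocks a')).card
            ≤ li := by
          rw [← hpda_blocks_through v k t lam i b li blocks hv htk hit hcard hdes hli
            (blocks a0 \ p.2.1) hTcard]
          exact Finset.card_le_card (Finset.filter_subset_filter _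
            (fun a' h => h) |>.trans (by intro a' ha'; simp_all))
        have hge : 1 ≤ (Finset.univ.filter
              (fun a' : Fin b => a' ≤ a0 ∧ blocks a0 \ p.2.1 ⊆ blocks a')).card := by
          rw [Nat.succ_le_iff, Finset.card_pos]
          exact ⟨a0, by simp [Finset.sdiff_subset]⟩
        rw [Finset.mem_Icc]
        exact ⟨hge, hle⟩
    calc _ ≤ (((blocks a0).powersetCard (i - 1)) ×ˢ Finset.Icc 1 li).card :=
          Finset.card_le_card hsub
      _ = Nat.choose k (i - 1) * li := by
          rw [Finset.card_product, Finset.card_powersetCard, hcard, Nat.card_Icc,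
            Nat.add_sub_cancel]
end
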